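/- arXiv:2505.07518 — 4 statements merged into one kernel-verified Lean document; each statement's English description precedes it below -/
import Mathlib

section
/- Let F/C be a separable field extension of characteristic exponent p, let c be a well-ordered p-basis of C, and let a be a well-ordered subset of F. Then: (i) the Λ-closure Λ_F C(a) (the minimum subfield D of F with C(a) ⊆ D and F/D separable) equals C(λ_{F/c}a); (ii) λ^I_{F/c}a is a p-basis over C of both C(λ^I_{F/c}a) and C(λ_{F/c}a); (iii) the extension C(λ_{F/c}a) / C(λ^I_{F/c}a) is separated; (iv) both F / C(λ^I_{F/c}a) and F / C(λ_{F/c}a) are separable. -/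
open scoped Classical

namespace SepPaper

variable {F : Type*} [Field F]

/-- The image of a set under `x ↦ x ^ p`. -/
def pPow (p : ℕ) (S : Set F) : Set F := (fun x => x ^ p) '' S

/-- `F^(p)`: the set of all `p`-th powers of the field `F`. -/
def pPowers (p : ℕ) (F : Type*) [Field F] : Set F := Set.range fun x : F => x ^ p

/-- `F^(p)C(S)`: the subfield of `F` generated by all `p`-th powers together with the
sets `C` and `S`. -/
def pSpan (p : ℕ) (C S : Set F) : Subfield F :=
  Subfield.closure (pPowers p F ∪ C ∪ S)

/-- `A` is `p`-independent in `F` over `C`: no `a ∈ A` lies in `F^(p)C(A \ {a})`. -/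
def PIndep (p : ℕ) (C A : Set F) : Prop :=
  ∀ a ∈ A, a ∉ pSpan p C (A \ {a})

/-- `A` is a `p`-basis of `F` over `C`: `p`-independent and `p`-spanning over `C`. -/
def PBasis (p : ℕ) (C A : Set F) : Prop :=
  PIndep p C A ∧ pSpan p C A = ⊤

/-- `A` is a `p`-basis over `C` of the subfield of `F` with carrier `E`:
`A ⊆ E`, `A` is `p`-independent in `E` over `C`, and `E = E^(p)C(A)`. -/
def PBasisOfSet (p : ℕ) (E C A : Set F) : Prop :=
  A ⊆ E ∧ (∀ x ∈ A, x ∉ Subfield.closure (pPow p E ∪ C ∪ (A \ {x}))) ∧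
    E ⊆ ↑(Subfield.closure (pPow p E ∪ C ∪ A))

/-- `l` represents the (finitely supported) family `(λ^B_I(a))_{I ∈ p^{[|B|]}}`:
all multi-indices in the support have entries `< p`, and
`a = Σ_I B^I · (l I)^p`. -/
def IsLambdaFam (p : ℕ) (B : Set F) (a : F) (l : (↥B →₀ ℕ) →₀ F) : Prop :=
  (∀ I ∈ l.support, ∀ t : ↥B, I t < p) ∧
    a = l.sum fun I y => (I.prod fun t k => (t : F) ^ k) * y ^ p

/-- The family of parameterized lambda functions `I ↦ λ^B_I(a)`
(defined to be `0` when no defining family exists; when `B` is `p`-independent and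
`a ∈ F^(p)(B)` the defining family exists and is unique). -/
noncomputable def lambdaFam (p : ℕ) (B : Set F) (a : F) : (↥B →₀ ℕ) → F :=
  if h : ∃ l, IsLambdaFam p B a l then ⇑h.choose else 0

/-- `λ^B(a)` for a single element `a`: the set of values `λ^B_I(a)`, `I ∈ p^{[|B|]}`. -/
def lambdaVals (p : ℕ) (B : Set F) (a : F) : Set F :=
  {y | ∃ I : ↥B →₀ ℕ, (∀ t, I t < p) ∧ y = lambdaFam p B a I}

/-- `λ^B(A)` for a set `A`: all values `λ^B_I(a)` for `a ∈ A ∩ F^(p)(B)`. -/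
def lambdaSet (p : ℕ) (B A : Set F) : Set F :=
  {y | ∃ a ∈ A ∩ (pSpan p ∅ B : Set F), y ∈ lambdaVals p B a}

/-- `E/C` is separable (with `p` the characteristic exponent): every `C`-linearly
independent tuple of elements of `E` has `C`-linearly independent `p`-th powers.
This is MacLane's criterion, equivalent to `E` being linearly disjoint from
`C^{(p^{-1})}` over `C` inside an algebraic closure. Here `C` and `E` are the carrier
sets of subfields of the ambient field. -/
def SepExt (p : ℕ) (C E : Set F) : Prop :=
  ∀ (n : ℕ) (x : Fin n → F), (∀ i, x i ∈ E) →
    (∀ d : Fin n → F, (∀ i, d i ∈ C) → (∑ i, d i * x i) = 0 → ∀ i, d i = 0) →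
    ∀ d : Fin n → F, (∀ i, d i ∈ C) → (∑ i, d i * x i ^ p) = 0 → ∀ i, d i = 0

/-- `E/C` is separated: separable and `E = E^(p)C`. -/
def SeparatedExt (p : ℕ) (C E : Set F) : Prop :=
  SepExt p C E ∧ E = ↑(Subfield.closure (pPow p E ∪ C))

/-- `D` is the Lambda closure `Λ_F C` of `C` in `F`: the minimum subfield of `F`
containing `C` such that `F/D` is separable. -/
def IsLambdaClosure (p : ℕ) (C : Set F) (D : Subfield F) : Prop :=
  C ⊆ ↑D ∧ SepExt p (↑D) (Set.univ : Set F) ∧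
    ∀ D' : Subfield F, C ⊆ ↑D' → SepExt p (↑D') (Set.univ : Set F) → D ≤ D'

/-- `Λ^1_F C`: the subfield of `F` generated over `C` by all values `λ^b_I(a)` for
finite `b ⊆ C` that are `p`-independent in `F`, and `a ∈ F^(p)(b) ∩ C`. -/
def Lambda1 (p : ℕ) (C : Subfield F) : Subfield F :=
  Subfield.closure ((C : Set F) ∪ {y | ∃ b : Set F, b ⊆ (C : Set F) ∧ b.Finite ∧
    PIndep p ∅ b ∧ ∃ a ∈ (pSpan p ∅ b : Set F) ∩ (C : Set F), y ∈ lambdaVals p b a})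

/-- The iterates `Λ^n_F C`. -/
def LambdaIter (p : ℕ) (C : Subfield F) : ℕ → Subfield F
  | 0 => C
  | n + 1 => Lambda1 p (LambdaIter p C n)

/-- `A`, `B`, `r` describe the sequence `(ℓ^n_{F/c}(a))_n` of pairs obtained by iterating
the splitting-pairs map `Λ_{F/c}` starting from `(∅, a)`, over the subfield with carrier
`Cs` with chosen `p`-basis `c`.  `A n` and `B n` are the two components of the `n`-th
pair, and `r n` is the well-ordering of `B n` (each `B (n+1)` extending `B n` as an
initial segment).  The `step` condition encodes one application of the splitting-pairs
map: `A (n+1) = A n ⌢ pInd_{F/C(A n)}(B n)` and `B (n+1) = B n ⌢ λ^{c⌢A(n+1)}(B n)`,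
where the set `s = pInd_{F/C(A n)}(B n)` is characterized by keeping, running through
`B n` in its well-order, exactly those elements not in the `p`-span over `C(A n)` of
those already kept. -/
structure IsSplitSeq (p : ℕ) (Cs c a : Set F) (A B : ℕ → Set F)
    (r : ℕ → F → F → Prop) : Prop where
  initA : A 0 = ∅
  initB : B 0 = a
  wf : ∀ n, (B n).WellFoundedOn (r n)
  trans : ∀ n, ∀ x ∈ B n, ∀ y ∈ B n, ∀ z ∈ B n, r n x y → r n y z → r n x z
  total : ∀ n, ∀ x ∈ B n, ∀ y ∈ B n, x = y ∨ r n x y ∨ r n y x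
  irrefl : ∀ n, ∀ x ∈ B n, ¬ r n x x
  mono : ∀ n, B n ⊆ B (n + 1)
  compat : ∀ n, ∀ x ∈ B n, ∀ y ∈ B n, (r (n + 1) x y ↔ r n x y)
  append : ∀ n, ∀ x ∈ B n, ∀ y ∈ B (n + 1), y ∉ B n → r (n + 1) x y
  step : ∀ n, ∃ s ⊆ B n,
    (∀ x ∈ B n, x ∈ s ↔
        x ∉ pSpan p ↑(Subfield.closure (Cs ∪ A n)) (s ∩ {y | r n y x})) ∧
      A (n + 1) = A n ∪ s ∧ B (n + 1) = B n ∪ lambdaSet p (c ∪ A (n + 1)) (B n)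

/-- The family `v` is a linear basis, over the subfield `K`, of the subspace of the
ambient field with carrier `E`: every element of `E` has a unique representation as a
finite `K`-linear combination of the `v i`. -/
def IsLinBasisOf (K : Subfield F) {ι : Type*} (v : ι → F) (E : Set F) : Prop :=
  (∀ i, v i ∈ E) ∧
    ∀ x ∈ E, ∃! l : ι →₀ F, (∀ i, l i ∈ K) ∧ x = l.sum fun i k => k * v i

end SepPaper


namespace SepPaper
open Polynomial

variable {F : Type*} [Field F]


theorem lpow_aux {p : ℕ} (hp : p.Prime) [CharP F p] (K' : Subfield F) (t : F)
    (htp : t ^ p ∈ K') (ht : t ∉ K') :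
    (minpoly K' t).natDegree = p := by
  haveI : Fact p.Prime := ⟨hp⟩
  have haev : (t : F) ^ p - (algebraMap K' F) (⟨t ^ p, htp⟩ : K') = 0 := sub_self _
  have hint : IsIntegral K' t := by
    refine ⟨X ^ p - C (⟨t ^ p, htp⟩ : K'), ?_, ?_⟩
    · exact Polynomial.monic_X_pow_sub_C _ hp.ne_zero
    · simpa [map_sub, map_pow] using haev
  have hdvd : minpoly K' t ∣ X ^ p - C (⟨t ^ p, htp⟩ : K') := by
    apply minpoly.dvd; simpa [map_sub, map_pow] using haev
  have hmapdvd : (minpoly K' t).map (algebraMap K' F) ∣ (X - C t) ^ p := by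
    have h2 := Polynomial.map_dvd (algebraMap K' F) hdvd
    rw [Polynomial.map_sub, Polynomial.map_pow, Polynomial.map_X, Polynomial.map_C,
      show (algebraMap K' F) (⟨t ^ p, htp⟩ : K') = t ^ p from rfl] at h2
    rwa [sub_pow_char, ← C_pow]
  obtain ⟨d, hdp, hassoc⟩ := (dvd_prime_pow (Polynomial.prime_X_sub_C t) p).mp hmapdvd
  have hmonic : ((minpoly K' t).map (algebraMap K' F)).Monic :=
    (minpoly.monic hint).map _
  have heq : (minpoly K' t).map (algebraMap K' F) = (X - C t) ^ d :=
    Polynomial.eq_of_monic_of_associated hmonic ((monic_X_sub_C t).pow d) hassoc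
  have hnd : (minpoly K' t).natDegree = d := by
    have := congrArg Polynomial.natDegree heq
    rwa [Polynomial.natDegree_map, Polynomial.natDegree_pow, Polynomial.natDegree_X_sub_C,
      mul_one] at this
  rcases eq_or_lt_of_le hdp with h | hlt
  · rw [hnd, h]
  · exfalso
    have hd0 : 0 < d := by
      rw [← hnd]; exact minpoly.natDegree_pos hint
    have hchoose : (d.choose (d - 1)) = d := by
      rw [Nat.choose_symm (by omega : 1 ≤ d), Nat.choose_one_right]
    have hcoeff : ((X - C t) ^ d).coeff (d - 1) = -t * d := by
      rw [sub_eq_add_neg, ← map_neg C t, Polynomial.coeff_X_add_C_pow,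
        show d - (d - 1) = 1 from by omega, pow_one, hchoose]
    have hmem : -t * (d : F) ∈ K' := by
      have h3 : ((minpoly K' t).map (algebraMap K' F)).coeff (d - 1) =
          algebraMap K' F ((minpoly K' t).coeff (d - 1)) := Polynomial.coeff_map _ _
      rw [heq, hcoeff] at h3
      rw [h3]; exact (((minpoly K' t).coeff (d - 1))).2
    have hdF : (d : F) ≠ 0 := by
      rw [Ne, CharP.cast_eq_zero_iff F p]
      exact Nat.not_dvd_of_pos_of_lt hd0 hlt
    apply ht
    have h4 : t = (-t * (d : F)) * (-((d : F))⁻¹) := by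
      field_simp
    rw [h4]
    exact K'.mul_mem hmem (K'.neg_mem (K'.inv_mem (by exact_mod_cast natCast_mem K' d)))

theorem lpow {p : ℕ} (hp : p.Prime) [CharP F p] (K' : Subfield F) (t : F)
    (htp : t ^ p ∈ K') (ht : t ∉ K') (d : ℕ → F) (hd : ∀ k < p, d k ∈ K')
    (hsum : ∑ k ∈ Finset.range p, d k * t ^ k = 0) : ∀ k < p, d k = 0 := by
  haveI : Fact p.Prime := ⟨hp⟩
  set d' : ℕ → K' := fun k => if h : k < p then (⟨d k, hd k h⟩ : K') else 0 with hd'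
  have hval : ∀ k, k < p → ((d' k : F) = d k) := by
    intro k hk; simp only [hd', dif_pos hk]
  set q : Polynomial K' := ∑ k ∈ Finset.range p, C (d' k) * X ^ k with hq
  have hcoeff : ∀ m, q.coeff m = if m ∈ Finset.range p then d' m else 0 := by
    intro m
    rw [hq, Polynomial.finset_sum_coeff]
    simp only [Polynomial.coeff_C_mul, Polynomial.coeff_X_pow]
    rw [Finset.sum_congr rfl (fun k _ => by rw [mul_ite, mul_one, mul_zero])]
    exact Finset.sum_ite_eq _ m d'
  have haev : Polynomial.aeval t q = 0 := by
    rw [hq, map_sum]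
    have h5 : ∀ k ∈ Finset.range p, Polynomial.aeval t (C (d' k) * X ^ k) = d k * t ^ k := by
      intro k hk
      rw [map_mul, map_pow, Polynomial.aeval_X, Polynomial.aeval_C]
      exact congrArg (· * t ^ k) (hval k (Finset.mem_range.mp hk))
    rw [Finset.sum_congr rfl h5, hsum]
  have hq0 : q = 0 := by
    by_contra hq0
    have hdegq : q.degree < (p : ℕ) := by
      rw [Polynomial.degree_lt_iff_coeff_zero]
      intro m hm
      rw [hcoeff m, if_neg (by simp; exact_mod_cast hm)]
    have hint : IsIntegral K' t := by
      refine ⟨X ^ p - C (⟨t ^ p, htp⟩ : K'), Polynomial.monic_X_pow_sub_C _ hp.ne_zero, by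
        simp only [Polynomial.eval₂_sub, Polynomial.eval₂_pow, Polynomial.eval₂_X,
          Polynomial.eval₂_C]; exact sub_self _⟩
    have hmindeg : (minpoly K' t).degree = (p : ℕ) := by
      have hne : minpoly K' t ≠ 0 := minpoly.ne_zero hint
      rw [Polynomial.degree_eq_natDegree hne, lpow_aux hp K' t htp ht]
    have := minpoly.degree_le_of_ne_zero K' t hq0 haev
    rw [hmindeg] at this
    exact absurd (lt_of_le_of_lt this hdegq) (lt_irrefl _)
  intro k hk
  have h6 := hcoeff k
  rw [hq0, Polynomial.coeff_zero, if_pos (Finset.mem_range.mpr hk)] at h6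
  rw [← hval k hk, ← h6]; rfl

section Rep
variable (p : ℕ) (K : Subfield F) (S : Set F)

/-- monomial in elements of `S` -/
noncomputable def mon (I : ↥S →₀ ℕ) : F := I.prod fun t k => (t : F) ^ k

/-- `x` has a reduced representation over `K^p` with monomials in `S` -/
def Rep (x : F) : Prop :=
  ∃ l : (↥S →₀ ℕ) →₀ F, (∀ I ∈ l.support, ∀ t, I t < p) ∧ (∀ I, l I ∈ K) ∧
    x = l.sum fun I y => mon S I * y ^ p

variable {p K S}

theorem mon_zero : mon S 0 = 1 := Finsupp.prod_zero_index

theorem mon_single (t : ↥S) (k : ℕ) : mon S (Finsupp.single t k) = (t : F) ^ k :=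
  Finsupp.prod_single_index (pow_zero _)

theorem mon_add (I J : ↥S →₀ ℕ) : mon S (I + J) = mon S I * mon S J :=
  Finsupp.prod_add_index (fun a _ => pow_zero _) (fun a _ b₁ b₂ => pow_add _ _ _)

theorem mon_mem (hSK : S ⊆ ↑K) (I : ↥S →₀ ℕ) : mon S I ∈ K :=
  prod_mem fun t _ => K.pow_mem (hSK t.2) _

variable (hp : p ≠ 0)
include hp

theorem rep_zero : Rep p K S 0 :=
  ⟨0, by simp, by simp [Subfield.zero_mem], by simp [Finsupp.sum_zero_index]⟩

theorem rep_monomial (hSK : S ⊆ ↑K) (L : ↥S →₀ ℕ) {v : F} (hv : v ∈ K) :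
    Rep p K S (mon S L * v ^ p) := by
  set A : ↥S →₀ ℕ := L.mapRange (· % p) (Nat.zero_mod p)
  set B : ↥S →₀ ℕ := L.mapRange (· / p) (Nat.zero_div p)
  have hmonA : mon S A = L.prod fun t k => (t : F) ^ (k % p) :=
    Finsupp.prod_mapRange_index (fun t => pow_zero _)
  have hmonB : mon S B = L.prod fun t k => (t : F) ^ (k / p) :=
    Finsupp.prod_mapRange_index (fun t => pow_zero _)
  have hmB : mon S B ∈ K := mon_mem hSK B
  have hsplit : mon S L = mon S A * (mon S B) ^ p := by
    rw [hmonA, hmonB, Finsupp.prod, Finsupp.prod, ← Finset.prod_pow, ← Finset.prod_mul_distrib]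
    apply Finset.prod_congr rfl
    intro t _
    rw [← pow_mul, ← pow_add, Nat.mod_add_div' (L t) p]
  refine ⟨Finsupp.single A (mon S B * v), ?_, ?_, ?_⟩
  · intro I hI t
    have := Finsupp.support_single_subset hI
    rw [Finset.mem_singleton] at this
    subst this
    simpa [A, Finsupp.mapRange_apply] using Nat.mod_lt (L t) (Nat.pos_of_ne_zero hp)
  · intro I
    rw [Finsupp.single_apply]
    split
    · exact K.mul_mem hmB hv
    · exact K.zero_mem
  · rw [Finsupp.sum_single_index (by rw [zero_pow hp, mul_zero]), hsplit, mul_pow]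
    ring

variable (hpp : p.Prime) [CharP F p]
include hpp

theorem rep_add {x y : F} (hx : Rep p K S x) (hy : Rep p K S y) : Rep p K S (x + y) := by
  obtain ⟨l₁, h₁s, h₁k, rfl⟩ := hx
  obtain ⟨l₂, h₂s, h₂k, rfl⟩ := hy
  refine ⟨l₁ + l₂, ?_, ?_, ?_⟩
  · intro I hI t
    have := Finsupp.support_add hI
    rw [Finset.mem_union] at this
    rcases this with h | h
    · exact h₁s I h t
    · exact h₂s I h t
  · intro I
    rw [Finsupp.add_apply]
    exact K.add_mem (h₁k I) (h₂k I)
  · rw [Finsupp.sum_add_index (fun I _ => by rw [zero_pow hp, mul_zero])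
      (fun I _ y₁ y₂ => by
        haveI : Fact p.Prime := ⟨hpp⟩
        rw [add_pow_char, mul_add])]

theorem rep_sum {ι : Type*} (s : Finset ι) (f : ι → F) (hf : ∀ i ∈ s, Rep p K S (f i)) :
    Rep p K S (∑ i ∈ s, f i) :=
  Finset.sum_induction f (Rep p K S) (fun _ _ => rep_add hp hpp) (rep_zero hp) hf

theorem rep_finsupp_sum (l : (↥S →₀ ℕ) →₀ F) (g : (↥S →₀ ℕ) → F → F)
    (hg : ∀ I ∈ l.support, Rep p K S (g I (l I))) : Rep p K S (l.sum g) :=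
  rep_sum hp hpp _ _ hg

theorem rep_mul (hSK : S ⊆ ↑K) {x y : F} (hx : Rep p K S x) (hy : Rep p K S y) :
    Rep p K S (x * y) := by
  obtain ⟨l₁, h₁s, h₁k, rfl⟩ := hx
  obtain ⟨l₂, h₂s, h₂k, rfl⟩ := hy
  rw [Finsupp.sum_mul]
  apply rep_finsupp_sum hp hpp
  intro I _
  rw [Finsupp.mul_sum]
  apply rep_finsupp_sum hp hpp
  intro J _
  have : mon S I * l₁ I ^ p * (mon S J * l₂ J ^ p) = mon S (I + J) * (l₁ I * l₂ J) ^ p := by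
    rw [mon_add, mul_pow]; ring
  rw [this]
  exact rep_monomial hp hSK _ (K.mul_mem (h₁k I) (h₂k J))

theorem rep_pow (hSK : S ⊆ ↑K) {x : F} (hx : Rep p K S x) (n : ℕ) : Rep p K S (x ^ n) := by
  induction n with
  | zero =>
    rw [pow_zero]
    have := rep_monomial hp (K := K) hSK 0 K.one_mem
    rwa [mon_zero, one_mul, one_pow] at this
  | succ n ih =>
    rw [pow_succ]
    exact rep_mul hp hpp hSK ih hx

theorem rep_psmul (hSK : S ⊆ ↑K) {x c : F} (hc : c ∈ K) (hx : Rep p K S x) :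
    Rep p K S (c ^ p * x) := by
  obtain ⟨l, hs, hk, rfl⟩ := hx
  rw [Finsupp.mul_sum]
  apply rep_finsupp_sum hp hpp
  intro I _
  have : c ^ p * (mon S I * l I ^ p) = mon S I * (c * l I) ^ p := by
    rw [mul_pow]; ring
  rw [this]
  exact rep_monomial hp hSK _ (K.mul_mem hc (hk I))

theorem neg_pow_charp (y : F) : (-y) ^ p = -(y ^ p) := by
  rcases hpp.eq_two_or_odd' with rfl | hodd
  · rw [CharTwo.neg_eq, CharTwo.neg_eq]
  · exact hodd.neg_pow y

theorem rep_neg {x : F} (hx : Rep p K S x) : Rep p K S (-x) := by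
  haveI : Fact p.Prime := ⟨hpp⟩
  obtain ⟨l, hs, hk, rfl⟩ := hx
  refine ⟨l.mapRange (fun y => -y) neg_zero, ?_, ?_, ?_⟩
  · intro I hI t
    exact hs I (Finsupp.support_mapRange hI) t
  · intro I
    rw [Finsupp.mapRange_apply]
    exact K.neg_mem (hk I)
  · rw [Finsupp.sum_mapRange_index (fun I => by rw [zero_pow hp, mul_zero]),
      ← Finsupp.sum_neg]
    apply Finsupp.sum_congr
    intro I _
    rw [neg_pow_charp hp hpp, mul_neg]

omit hp hpp [CharP F p] in
theorem rep_mem (hSK : S ⊆ ↑K) {x : F} (hx : Rep p K S x) : x ∈ K := by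
  obtain ⟨l, _, hk, rfl⟩ := hx
  apply sum_mem
  intro I _
  exact K.mul_mem (mon_mem hSK I) (K.pow_mem (hk I) p)

theorem rep_inv (hSK : S ⊆ ↑K) {x : F} (hx : Rep p K S x) : Rep p K S x⁻¹ := by
  rcases eq_or_ne x 0 with rfl | hx0
  · rw [inv_zero]; exact rep_zero hp
  · have hps : x ^ p = x ^ (p - 1) * x := by
      rw [← pow_succ]
      congr 1
      omega
    have h1 : (x⁻¹) ^ p * x ^ (p - 1) = x⁻¹ := by
      rw [inv_pow, hps, mul_inv, mul_right_comm,
        inv_mul_cancel₀ (pow_ne_zero _ hx0), one_mul]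
    rw [← h1]
    exact rep_psmul hp hpp hSK (K.inv_mem (rep_mem hSK hx)) (rep_pow hp hpp hSK hx (p - 1))

theorem rep_of_mem_closure {x : F} (hSK : S ⊆ ↑K)
    (hx : x ∈ Subfield.closure (pPow p (K : Set F) ∪ S)) : Rep p K S x := by
  induction hx using Subfield.closure_induction with
  | mem z hz =>
    rcases hz with hz | hz
    · obtain ⟨k, hk, rfl⟩ := hz
      have := rep_monomial hp (K := K) hSK 0 hk
      rwa [mon_zero, one_mul] at this
    · have := rep_monomial hp (K := K) hSK (Finsupp.single (⟨z, hz⟩ : ↥S) 1) K.one_mem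
      rwa [mon_single, pow_one, one_pow, mul_one] at this
  | one =>
    have := rep_monomial hp (K := K) hSK 0 K.one_mem
    rwa [mon_zero, one_mul, one_pow] at this
  | add x y _ _ hx hy => exact rep_add hp hpp hx hy
  | neg x _ hx => exact rep_neg hp hpp hx
  | inv x _ hx => exact rep_inv hp hpp hSK hx
  | mul x y _ _ hx hy => exact rep_mul hp hpp hSK hx hy

end Rep

section MonInd

variable {p : ℕ} (hpp : p.Prime) [CharP F p]

theorem exists_max_finset (X : Set F) (lt : F → F → Prop)
    (htrans : ∀ a ∈ X, ∀ b ∈ X, ∀ c ∈ X, lt a b → lt b c → lt a c)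
    (htotal : ∀ a ∈ X, ∀ b ∈ X, a = b ∨ lt a b ∨ lt b a)
    (U : Finset F) (hUX : ↑U ⊆ X) (hne : U.Nonempty) :
    ∃ m ∈ U, ∀ u ∈ U, u = m ∨ lt u m := by
  classical
  induction U using Finset.induction_on with
  | empty => exact absurd hne (by simp)
  | @insert a s ha ih =>
    have haX : a ∈ X := hUX (Finset.mem_insert_self a s)
    have hsX : ↑s ⊆ X := fun z hz => hUX (Finset.mem_insert_of_mem hz)
    rcases s.eq_empty_or_nonempty with rfl | hs
    · exact ⟨a, Finset.mem_insert_self a _, fun u hu => Or.inl (by simpa using hu)⟩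
    · obtain ⟨m, hm, hmax⟩ := ih hsX hs
      have hmX : m ∈ X := hsX hm
      rcases htotal a haX m hmX with heq | hlt | hlt
      · refine ⟨m, Finset.mem_insert_of_mem hm, fun u hu => ?_⟩
        rcases Finset.mem_insert.mp hu with rfl | hu
        · exact Or.inl heq
        · exact hmax u hu
      · refine ⟨m, Finset.mem_insert_of_mem hm, fun u hu => ?_⟩
        rcases Finset.mem_insert.mp hu with rfl | hu
        · exact Or.inr hlt
        · exact hmax u hu
      · refine ⟨a, Finset.mem_insert_self a s, fun u hu => ?_⟩
        rcases Finset.mem_insert.mp hu with rfl | hu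
        · exact Or.inl rfl
        · rcases hmax u hu with rfl | h
          · exact Or.inr hlt
          · exact Or.inr (htrans u (hsX hu) m hmX a haX h hlt)

theorem mon_erase {X : Set F} (I : ↥X →₀ ℕ) (t : ↥X) :
    mon X I = (t : F) ^ (I t) * mon X (I.erase t) := by
  classical
  by_cases ht : t ∈ I.support
  · unfold mon
    rw [Finsupp.prod, Finsupp.prod, Finsupp.support_erase,
      ← Finset.mul_prod_erase I.support (fun s => (s : F) ^ (I s)) ht]
    congr 1
    apply Finset.prod_congr rfl
    intro s hs
    rw [Finsupp.erase_ne (Finset.ne_of_mem_erase hs)]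
  · have h0 : I t = 0 := Finsupp.notMem_support_iff.mp ht
    have : I.erase t = I := by
      ext s
      rcases eq_or_ne s t with rfl | h
      · rw [Finsupp.erase_same, h0]
      · rw [Finsupp.erase_ne h]
    rw [this, h0, pow_zero, one_mul]

include hpp

theorem monomial_indep_aux (K : Subfield F) (X : Set F) (hXK : X ⊆ ↑K)
    (lt : F → F → Prop)
    (htrans : ∀ a ∈ X, ∀ b ∈ X, ∀ c ∈ X, lt a b → lt b c → lt a c)
    (htotal : ∀ a ∈ X, ∀ b ∈ X, a = b ∨ lt a b ∨ lt b a)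
    (hpred : ∀ t ∈ X, t ∉ Subfield.closure (pPow p (K : Set F) ∪ {y | y ∈ X ∧ lt y t})) :
    ∀ (n : ℕ) (T : Finset (↥X →₀ ℕ)), (T.sup fun I => I.support).card ≤ n →
    (∀ I ∈ T, ∀ t, I t < p) → ∀ y : (↥X →₀ ℕ) → F, (∀ I ∈ T, y I ∈ K) →
    (∑ I ∈ T, mon X I * (y I) ^ p) = 0 → ∀ I ∈ T, y I = 0 := by
  classical
  have hp0 : p ≠ 0 := hpp.ne_zero
  intro n
  induction n with
  | zero =>
    intro T hcard hT y hy hsum I hI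
    have hU : (T.sup fun I => I.support) = ∅ := Finset.card_eq_zero.mp (Nat.le_zero.mp hcard)
    have hI0 : ∀ J ∈ T, J = 0 := by
      intro J hJ
      have : J.support ⊆ (T.sup fun I => I.support) := Finset.le_sup hJ
      rw [hU] at this
      exact Finsupp.support_eq_empty.mp (Finset.subset_empty.mp this)
    have hI0' := hI0 I hI
    subst hI0'
    have hT0 : T = {0} := by
      apply Finset.eq_singleton_iff_unique_mem.mpr
      exact ⟨hI, fun J hJ => hI0 J hJ⟩
    rw [hT0, Finset.sum_singleton, mon_zero, one_mul] at hsum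
    exact pow_eq_zero_iff hp0 |>.mp hsum
  | succ n ih =>
    intro T hcard hT y hy hsum I hI
    set U : Finset (↥X) := T.sup fun I => I.support with hU
    rcases U.eq_empty_or_nonempty with hUe | hUne
    · -- same as base case
      have hI0 : ∀ J ∈ T, J = 0 := by
        intro J hJ
        have : J.support ⊆ U := Finset.le_sup hJ
        rw [hUe] at this
        exact Finsupp.support_eq_empty.mp (Finset.subset_empty.mp this)
      have hI0' := hI0 I hI
      subst hI0'
      have hT0 : T = {0} := Finset.eq_singleton_iff_unique_mem.mpr ⟨hI, fun J hJ => hI0 J hJ⟩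
      rw [hT0, Finset.sum_singleton, mon_zero, one_mul] at hsum
      exact pow_eq_zero_iff hp0 |>.mp hsum
    · -- pick the maximum used variable
      have hUmne : (U.image (fun s : ↥X => (s : F))).Nonempty := hUne.image _
      have hUmX : ↑(U.image (fun s : ↥X => (s : F))) ⊆ X := by
        intro z hz
        simp only [Finset.coe_image, Set.mem_image] at hz
        obtain ⟨s, _, rfl⟩ := hz
        exact s.2
      obtain ⟨m, hmU, hmax⟩ := exists_max_finset X lt htrans htotal _ hUmX hUmne
      obtain ⟨t, htU, rfl⟩ := Finset.mem_image.mp hmU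
      -- the subfield K'
      set K' : Subfield F :=
        Subfield.closure (pPow p (K : Set F) ∪ {y | y ∈ X ∧ lt y (t : F)}) with hK'
      have htmem : (t : F) ∈ X := t.2
      have htnot : (t : F) ∉ K' := hpred _ htmem
      have htp : (t : F) ^ p ∈ K' := by
        apply Subfield.subset_closure
        exact Or.inl ⟨(t : F), hXK htmem, rfl⟩
      -- coefficients
      set d : ℕ → F := fun k =>
        ∑ I ∈ T.filter (fun I => I t = k), mon X (I.erase t) * (y I) ^ p with hd
      have hdK : ∀ k, d k ∈ K' := by
        intro k
        apply sum_mem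
        intro J hJ
        apply K'.mul_mem
        · apply prod_mem
          intro s hs
          apply K'.pow_mem
          apply Subfield.subset_closure
          refine Or.inr ⟨s.2, ?_⟩
          rw [Finsupp.support_erase] at hs
          have hsub : J.support ⊆ U := Finset.le_sup (Finset.mem_filter.mp hJ).1
          have hsU : s ∈ U := hsub (Finset.mem_of_mem_erase hs)
          rcases hmax (s : F) (Finset.mem_image_of_mem _ hsU) with he | h
          · exact absurd (Subtype.ext he) (Finset.ne_of_mem_erase hs)
          · exact h
        · apply Subfield.subset_closure
          exact Or.inl ⟨y J, hy J (Finset.mem_filter.mp hJ).1, rfl⟩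
      have hsum2 : ∑ k ∈ Finset.range p, d k * (t : F) ^ k = 0 := by
        rw [← hsum]
        rw [← Finset.sum_fiberwise_of_maps_to (g := fun I => I t) (t := Finset.range p)
          (fun I hI => Finset.mem_range.mpr (hT I hI t))]
        apply Finset.sum_congr rfl
        intro k _
        rw [hd, Finset.sum_mul, Finset.sum_congr rfl]
        intro J hJ
        obtain ⟨hJT, hJk⟩ := Finset.mem_filter.mp hJ
        rw [mon_erase J t, hJk]
        ring
      have hd0 : ∀ k < p, d k = 0 :=
        lpow hpp K' (t : F) htp htnot d (fun k _ => hdK k) hsum2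
      -- recurse on each fiber
      have hfiber : ∀ k < p, ∀ J ∈ T.filter (fun I => I t = k), y J = 0 := by
        intro k hk J hJ
        set T' : Finset (↥X →₀ ℕ) :=
          (T.filter (fun I => I t = k)).image (fun I => I.erase t) with hT'
        have hrestore : ∀ I ∈ T.filter (fun I => I t = k),
            I.erase t + Finsupp.single t k = I := by
          intro I hI
          have := (Finset.mem_filter.mp hI).2
          rw [← this]
          exact Finsupp.erase_add_single t I
        have hinj : ∀ I₁ ∈ T.filter (fun I => I t = k), ∀ I₂ ∈ T.filter (fun I => I t = k),
            I₁.erase t = I₂.erase t → I₁ = I₂ := by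
          intro I₁ h₁ I₂ h₂ he
          rw [← hrestore I₁ h₁, ← hrestore I₂ h₂, he]
        have hcard' : (T'.sup fun I => I.support).card ≤ n := by
          have hsub : (T'.sup fun I => I.support) ⊆ U.erase t := by
            intro s hs
            rw [Finset.mem_sup] at hs
            obtain ⟨J', hJ', hsJ⟩ := hs
            obtain ⟨I, hIf, rfl⟩ := Finset.mem_image.mp hJ'
            rw [Finsupp.support_erase, Finset.mem_erase] at hsJ
            have hsub : I.support ⊆ U := Finset.le_sup (Finset.mem_filter.mp hIf).1
            exact Finset.mem_erase.mpr ⟨hsJ.1, hsub hsJ.2⟩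
          calc (T'.sup fun I => I.support).card ≤ (U.erase t).card :=
                Finset.card_le_card hsub
            _ = U.card - 1 := Finset.card_erase_of_mem htU
            _ ≤ n := by omega
        have hT'lt : ∀ I ∈ T', ∀ s, I s < p := by
          intro J' hJ' s
          obtain ⟨I, hIf, rfl⟩ := Finset.mem_image.mp hJ'
          rcases eq_or_ne s t with rfl | hst
          · rw [Finsupp.erase_same]; exact Nat.pos_of_ne_zero hp0
          · rw [Finsupp.erase_ne hst]; exact hT I (Finset.mem_filter.mp hIf).1 s
        have hy'K : ∀ J' ∈ T', (fun J'' => y (J'' + Finsupp.single t k)) J' ∈ K := by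
          intro J' hJ'
          obtain ⟨I, hIf, rfl⟩ := Finset.mem_image.mp hJ'
          show y (I.erase t + Finsupp.single t k) ∈ K
          rw [hrestore I hIf]
          exact hy I (Finset.mem_filter.mp hIf).1
        have hsum' : ∑ J' ∈ T',
            mon X J' * ((fun J'' => y (J'' + Finsupp.single t k)) J') ^ p = 0 := by
          rw [Finset.sum_image hinj]
          rw [← hd0 k hk, hd]
          apply Finset.sum_congr rfl
          intro I hIf
          show mon X (I.erase t) * y (I.erase t + Finsupp.single t k) ^ p =
            mon X (I.erase t) * y I ^ p
          rw [hrestore I hIf]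
        have hres := ih T' hcard' hT'lt (fun J'' => y (J'' + Finsupp.single t k)) hy'K hsum'
          (J.erase t) (Finset.mem_image_of_mem _ hJ)
        have hgoal : y (J.erase t + Finsupp.single t k) = 0 := hres
        rw [hrestore J hJ] at hgoal
        exact hgoal
      exact hfiber (I t) (hT I hI t) I (Finset.mem_filter.mpr ⟨hI, rfl⟩)

end MonInd

section LinAlg

variable {p : ℕ}

/-- elementary linear independence of `1, g 0, ..., g (k-1)` over the subfield `K` -/
def ElemIndep1 (K : Subfield F) {k : ℕ} (g : Fin k → F) : Prop :=
  ∀ (d0 : F) (d : Fin k → F), d0 ∈ K → (∀ j, d j ∈ K) →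
    d0 + ∑ j, d j * g j = 0 → d0 = 0 ∧ ∀ j, d j = 0

/-- `x` decomposes as a `K`-combination of `1, g 0, ..., g (k-1)` -/
def Dec (K : Subfield F) {k : ℕ} (g : Fin k → F) (x : F) : Prop :=
  ∃ (e0 : F) (e : Fin k → F), e0 ∈ K ∧ (∀ j, e j ∈ K) ∧ x = e0 + ∑ j, e j * g j

theorem exists_decomp (K : Subfield F) : ∀ (m : ℕ) (f : Fin m → F),
    ∃ (k : ℕ) (g : Fin k → F), ElemIndep1 K g ∧ ∀ i, Dec K g (f i) := by
  intro m
  induction m with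
  | zero =>
    intro f
    refine ⟨0, ![], ?_, fun i => i.elim0⟩
    intro d0 d hd0 _ hsum
    rw [Finset.univ_eq_empty, Finset.sum_empty, add_zero] at hsum
    exact ⟨hsum, fun j => j.elim0⟩
  | succ m ih =>
    intro f
    obtain ⟨k, g, hind, hdec⟩ := ih (fun i => f i.succ)
    by_cases hx : Dec K g (f 0)
    · refine ⟨k, g, hind, fun i => ?_⟩
      rcases Fin.eq_zero_or_eq_succ i with rfl | ⟨j, rfl⟩
      · exact hx
      · exact hdec j
    · refine ⟨k + 1, Fin.snoc g (f 0), ?_, ?_⟩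
      · intro d0 d hd0 hd hsum
        rw [Fin.sum_univ_castSucc] at hsum
        simp only [Fin.snoc_castSucc, Fin.snoc_last] at hsum
        by_cases hlast : d (Fin.last k) = 0
        · rw [hlast, zero_mul, add_zero] at hsum
          obtain ⟨h0, hrest⟩ := hind d0 (fun j => d j.castSucc) hd0 (fun j => hd _) hsum
          refine ⟨h0, fun j => ?_⟩
          rcases Fin.eq_castSucc_or_eq_last j with ⟨j', rfl⟩ | rfl
          · exact hrest j'
          · exact hlast
        · exfalso
          apply hx
          refine ⟨-d0 / d (Fin.last k), fun j => -(d j.castSucc) / d (Fin.last k),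
            K.div_mem (K.neg_mem hd0) (hd _), fun j => K.div_mem (K.neg_mem (hd _)) (hd _), ?_⟩
          have h5 : f 0 = (-d0 - ∑ j : Fin k, d j.castSucc * g j) / d (Fin.last k) := by
            rw [eq_div_iff hlast]
            linear_combination hsum
          have h6 : ∑ j : Fin k, -d j.castSucc / d (Fin.last k) * g j
              = (-∑ j : Fin k, d j.castSucc * g j) / d (Fin.last k) := by
            rw [← Finset.sum_neg_distrib, Finset.sum_div]
            apply Finset.sum_congr rfl
            intro j _
            ring
          rw [h5, h6, ← add_div]
          congr 1
          ring
      · intro i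
        rcases Fin.eq_zero_or_eq_succ i with rfl | ⟨j, rfl⟩
        · refine ⟨0, Fin.snoc (fun _ => 0) 1, K.zero_mem, ?_, ?_⟩
          · intro j
            rcases Fin.eq_castSucc_or_eq_last j with ⟨j', rfl⟩ | rfl
            · simpa using K.zero_mem
            · simpa using K.one_mem
          · rw [Fin.sum_univ_castSucc]
            simp
        · obtain ⟨e0, e, he0, he, heq⟩ := hdec j
          refine ⟨e0, Fin.snoc e 0, he0, ?_, ?_⟩
          · intro j'
            rcases Fin.eq_castSucc_or_eq_last j' with ⟨j'', rfl⟩ | rfl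
            · simpa using he j''
            · simpa using K.zero_mem
          · rw [Fin.sum_univ_castSucc]
            simp only [Fin.snoc_castSucc, Fin.snoc_last, zero_mul, add_zero]
            exact heq

end LinAlg

section MonomIndepDef

variable {p : ℕ}

/-- monomials with exponents `< p` in elements of `X` are linearly independent over `K^p` -/
def MonomIndep (p : ℕ) (K : Subfield F) (X : Set F) : Prop :=
  ∀ T : Finset (↥X →₀ ℕ), (∀ I ∈ T, ∀ t, I t < p) → ∀ y : (↥X →₀ ℕ) → F,
    (∀ I ∈ T, y I ∈ K) → (∑ I ∈ T, mon X I * (y I) ^ p) = 0 → ∀ I ∈ T, y I = 0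

variable (hpp : p.Prime) [CharP F p]
include hpp

theorem monomIndep_of_pred (K : Subfield F) (X : Set F) (hXK : X ⊆ ↑K)
    (lt : F → F → Prop)
    (htrans : ∀ a ∈ X, ∀ b ∈ X, ∀ c ∈ X, lt a b → lt b c → lt a c)
    (htotal : ∀ a ∈ X, ∀ b ∈ X, a = b ∨ lt a b ∨ lt b a)
    (hpred : ∀ t ∈ X, t ∉ Subfield.closure (pPow p (K : Set F) ∪ {y | y ∈ X ∧ lt y t})) :
    MonomIndep p K X := fun T hT y hy hsum =>
  monomial_indep_aux hpp K X hXK lt htrans htotal hpred (T.sup fun I => I.support).card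
    T le_rfl hT y hy hsum

/-- elementwise p-independence follows from monomial independence -/
theorem elem_of_monomIndep (K : Subfield F) (X : Set F) (hXK : X ⊆ ↑K)
    (hm : MonomIndep p K X) :
    ∀ x ∈ X, x ∉ Subfield.closure (pPow p (K : Set F) ∪ (X \ {x})) := by
  intro x hxX hmem
  have hp0 : p ≠ 0 := hpp.ne_zero
  obtain ⟨l, hls, hlK, hrep⟩ := rep_of_mem_closure hp0 hpp
    (fun z hz => hXK hz.1) hmem
  set e : ↥(X \ {x}) ↪ ↥X :=
    ⟨fun s => ⟨s.1, s.2.1⟩, by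
      intro a b h
      apply Subtype.ext
      have h2 := congrArg Subtype.val h
      exact h2⟩ with he
  set Emb : (↥(X \ {x}) →₀ ℕ) ↪ (↥X →₀ ℕ) :=
    ⟨fun I => I.embDomain e, Finsupp.embDomain_injective e⟩ with hEmb
  set L : (↥X →₀ ℕ) →₀ F := l.embDomain Emb with hL
  set x0 : ↥X := ⟨x, hxX⟩ with hx0
  set I0 : ↥X →₀ ℕ := Finsupp.single x0 1 with hI0def
  have hI0 : I0 ∉ L.support := by
    rw [hL, Finsupp.support_embDomain, Finset.mem_map]
    rintro ⟨I, hI, hEI⟩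
    have : x0 ∈ (Finsupp.embDomain e I).support := by
      rw [show Finsupp.embDomain e I = Emb I from rfl, hEI, hI0def]
      rw [Finsupp.support_single_ne_zero _ one_ne_zero]
      exact Finset.mem_singleton_self x0
    rw [Finsupp.support_embDomain, Finset.mem_map] at this
    obtain ⟨s, _, hs⟩ := this
    have : (s : F) = x := congrArg Subtype.val hs
    exact s.2.2 this
  have hLK : ∀ J, L J ∈ K := by
    intro J
    by_cases h : J ∈ L.support
    · rw [hL, Finsupp.support_embDomain, Finset.mem_map] at h
      obtain ⟨I, _, rfl⟩ := h
      have h7 : (Finsupp.embDomain Emb l) (Emb I) = l I :=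
        Finsupp.embDomain_apply_self Emb l I
      rw [h7]
      exact hlK I
    · rw [Finsupp.notMem_support_iff.mp h]
      exact K.zero_mem
  set T : Finset (↥X →₀ ℕ) := insert I0 L.support with hT
  set y : (↥X →₀ ℕ) → F := fun J => if J = I0 then (-1 : F) else L J with hy
  have hTent : ∀ I ∈ T, ∀ t, I t < p := by
    intro J hJ t
    rcases Finset.mem_insert.mp hJ with rfl | hJ
    · rw [hI0def, Finsupp.single_apply]
      split
      · exact hpp.one_lt
      · exact Nat.pos_of_ne_zero hp0
    · rw [hL, Finsupp.support_embDomain, Finset.mem_map] at hJ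
      obtain ⟨I, hI, rfl⟩ := hJ
      by_cases ht : (Emb I : ↥X →₀ ℕ) t = 0
      · rw [ht]; exact Nat.pos_of_ne_zero hp0
      · have : t ∈ (Emb I : ↥X →₀ ℕ).support := Finsupp.mem_support_iff.mpr ht
        rw [show (Emb I : ↥X →₀ ℕ) = Finsupp.embDomain e I from rfl,
          Finsupp.support_embDomain, Finset.mem_map] at this
        obtain ⟨s, _, rfl⟩ := this
        have h8 : (Finsupp.embDomain e I) (e s) = I s := Finsupp.embDomain_apply_self e I s
        have h9 : (Emb I : ↥X →₀ ℕ) (e s) = I s := h8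
        rw [h9]
        exact hls I hI s
  have hyK : ∀ I ∈ T, y I ∈ K := by
    intro J _
    rw [hy]
    dsimp only
    split
    · exact K.neg_mem K.one_mem
    · exact hLK J
  have hsum : ∑ J ∈ T, mon X J * (y J) ^ p = 0 := by
    rw [hT, Finset.sum_insert hI0]
    have h1 : y I0 = -1 := if_pos rfl
    have h2 : ∀ J ∈ L.support, mon X J * (y J) ^ p = mon X J * (L J) ^ p := by
      intro J hJ
      have : J ≠ I0 := fun h => hI0 (h ▸ hJ)
      rw [hy]
      dsimp only
      rw [if_neg this]
    rw [h1, Finset.sum_congr rfl h2]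
    have h3 : mon X I0 = x := by rw [hI0def, mon_single, pow_one]
    have h4 : (-1 : F) ^ p = -1 := by
      have := neg_pow_charp hp0 hpp (1 : F)
      rwa [one_pow] at this
    have h5 : ∑ J ∈ L.support, mon X J * (L J) ^ p = x := by
      have h6 : ∑ J ∈ L.support, mon X J * (L J) ^ p
          = L.sum fun J z => mon X J * z ^ p := rfl
      rw [h6, hL, Finsupp.sum_embDomain]
      conv_rhs => rw [hrep]
      apply Finsupp.sum_congr
      intro I _
      congr 1
      exact Finsupp.prod_embDomain
    rw [h3, h4, h5]
    ring
  have := hm T hTent y hyK hsum I0 (Finset.mem_insert_self _ _)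
  rw [hy] at this
  dsimp only at this
  rw [if_pos rfl] at this
  exact absurd this (by norm_num)

end MonomIndepDef

section Transfer

variable {p : ℕ} (hpp : p.Prime) [CharP F p]
include hpp

/-- transfer of monomial independence along a separable extension (MacLane) -/
theorem monomIndep_top_of_sep (C : Subfield F)
    (hsep : SepExt p (C : Set F) (Set.univ : Set F)) (X : Set F) (hXC : X ⊆ ↑C)
    (hm : MonomIndep p C X) : MonomIndep p ⊤ X := by
  haveI : Fact p.Prime := ⟨hpp⟩
  intro T hT y hyK hsum I0 hI0
  classical
  set m := T.card with hmdef
  set σ := T.equivFin with hσ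
  obtain ⟨k, g, hind, hdec⟩ := exists_decomp C m (fun i => y (σ.symm i : ↥T))
  choose e0 e he0 he heq using hdec
  set G : Fin (k + 1) → F := Fin.cons 1 g with hG
  set E : (↥X →₀ ℕ) → Fin (k + 1) → F := fun I =>
    if h : I ∈ T then Fin.cons (e0 (σ ⟨I, h⟩)) (e (σ ⟨I, h⟩)) else 0 with hE
  have hyEG : ∀ I (h : I ∈ T), y I = ∑ j, E I j * G j := by
    intro I h
    have h1 : y I = e0 (σ ⟨I, h⟩) + ∑ j, e (σ ⟨I, h⟩) j * g j := by
      have := heq (σ ⟨I, h⟩)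
      rwa [Equiv.symm_apply_apply] at this
    rw [h1, hE, hG]
    rw [Fin.sum_univ_succ]
    simp only [dif_pos h, Fin.cons_zero, Fin.cons_succ, one_mul]
    rw [mul_one]
  have hEC : ∀ I j, E I j ∈ C := by
    intro I j
    rw [hE]
    dsimp only
    split
    · rcases Fin.eq_zero_or_eq_succ j with rfl | ⟨j', rfl⟩
      · rw [Fin.cons_zero]; exact he0 _
      · rw [Fin.cons_succ]; exact he _ _
    · exact C.zero_mem
  -- coefficients of the relation grouped by basis element
  have hrel : ∑ j, (∑ I ∈ T, mon X I * (E I j) ^ p) * G j ^ p = 0 := by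
    calc ∑ j, (∑ I ∈ T, mon X I * (E I j) ^ p) * G j ^ p
        = ∑ j, ∑ I ∈ T, mon X I * (E I j) ^ p * G j ^ p := by
          apply Finset.sum_congr rfl
          intro j _
          rw [Finset.sum_mul]
      _ = ∑ I ∈ T, ∑ j, mon X I * (E I j) ^ p * G j ^ p := Finset.sum_comm
      _ = ∑ I ∈ T, mon X I * (y I) ^ p := by
          apply Finset.sum_congr rfl
          intro I hI
          rw [hyEG I hI]
          rw [show (∑ j, E I j * G j) ^ p = (frobenius F p) (∑ j, E I j * G j) from rfl,
            map_sum, Finset.mul_sum]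
          apply Finset.sum_congr rfl
          intro j _
          rw [show (frobenius F p) (E I j * G j) = (E I j * G j) ^ p from rfl, mul_pow]
          ring
      _ = 0 := hsum
  -- apply separability to the independent family G
  have hGind : ∀ d : Fin (k + 1) → F, (∀ i, d i ∈ (C : Set F)) →
      (∑ i, d i * G i) = 0 → ∀ i, d i = 0 := by
    intro d hd hds
    rw [hG, Fin.sum_univ_succ, Fin.cons_zero, mul_one] at hds
    have := hind (d 0) (fun j => d j.succ) (hd 0) (fun j => hd _) (by
      rw [← hds]
      apply congrArg
      apply Finset.sum_congr rfl
      intro j _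
      rw [Fin.cons_succ])
    intro i
    rcases Fin.eq_zero_or_eq_succ i with rfl | ⟨j, rfl⟩
    · exact this.1
    · exact this.2 j
  have hc0 : ∀ j, (∑ I ∈ T, mon X I * (E I j) ^ p) = 0 := by
    have := hsep (k + 1) G (fun i => trivial) hGind
      (fun j => ∑ I ∈ T, mon X I * (E I j) ^ p)
      (fun j => by
        apply Subfield.sum_mem
        intro I hI
        exact C.mul_mem (mon_mem hXC I) (C.pow_mem (hEC I _) p)) hrel
    exact this
  have hE0 : ∀ j, ∀ I ∈ T, E I j = 0 := by
    intro j
    exact hm T hT (fun I => E I j) (fun I _ => hEC I j) (hc0 j)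
  rw [hyEG I0 hI0]
  apply Finset.sum_eq_zero
  intro j _
  rw [hE0 j I0 hI0, zero_mul]

/-- Separability of `F` over `D` via reduced representations and monomial independence -/
theorem sepext_of_monomIndep (D : Subfield F) (X : Set F) (hXD : X ⊆ ↑D)
    (hm : MonomIndep p ⊤ X)
    (hspan : (D : Set F) ⊆ ↑(Subfield.closure (pPow p (D : Set F) ∪ X))) :
    SepExt p (D : Set F) (Set.univ : Set F) := by
  haveI : Fact p.Prime := ⟨hpp⟩
  intro n x hx hind d hdD hsum i
  classical
  have hrep : ∀ i, Rep p D X (d i) := fun i =>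
    rep_of_mem_closure hpp.ne_zero hpp hXD (hspan (hdD i))
  choose l hls hlK hleq using hrep
  set T : Finset (↥X →₀ ℕ) := Finset.univ.biUnion (fun i : Fin n => (l i).support) with hT
  have hTent : ∀ I ∈ T, ∀ t, I t < p := by
    intro I hI t
    rw [hT, Finset.mem_biUnion] at hI
    obtain ⟨i, _, hIi⟩ := hI
    exact hls i I hIi t
  have hsum2 : ∑ I ∈ T, mon X I * (∑ i, l i I * x i) ^ p = 0 := by
    calc ∑ I ∈ T, mon X I * (∑ i, l i I * x i) ^ p
        = ∑ I ∈ T, ∑ i, mon X I * (l i I) ^ p * (x i) ^ p := by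
          apply Finset.sum_congr rfl
          intro I _
          rw [show (∑ i, l i I * x i) ^ p = (frobenius F p) (∑ i, l i I * x i) from rfl,
            map_sum, Finset.mul_sum]
          apply Finset.sum_congr rfl
          intro j _
          rw [show (frobenius F p) (l j I * x j) = (l j I * x j) ^ p from rfl, mul_pow]
          ring
      _ = ∑ i, ∑ I ∈ T, mon X I * (l i I) ^ p * (x i) ^ p := Finset.sum_comm
      _ = ∑ i, d i * (x i) ^ p := by
          apply Finset.sum_congr rfl
          intro i _
          rw [← Finset.sum_mul]
          congr 1
          rw [hleq i]
          have hsub : (l i).support ⊆ T := by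
            intro I hI
            rw [hT, Finset.mem_biUnion]
            exact ⟨i, Finset.mem_univ i, hI⟩
          rw [Finsupp.sum]
          symm
          apply Finset.sum_subset hsub
          intro I _ hIs
          rw [Finsupp.notMem_support_iff.mp hIs, zero_pow hpp.ne_zero, mul_zero]
      _ = 0 := hsum
  have h0 : ∀ I ∈ T, (∑ i, l i I * x i) = 0 :=
    hm T hTent _ (fun _ _ => trivial) hsum2
  have hli0 : ∀ I ∈ T, ∀ j, l j I = 0 := fun I hI =>
    hind (fun j => l j I) (fun j => hlK j I) (h0 I hI)
  rw [hleq i, Finsupp.sum]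
  apply Finset.sum_eq_zero
  intro I hI
  have : I ∈ T := by
    rw [hT, Finset.mem_biUnion]
    exact ⟨i, Finset.mem_univ i, hI⟩
  rw [hli0 I this i, zero_pow hpp.ne_zero, mul_zero]

end Transfer

theorem sepext_mono {p : ℕ} {C E E' : Set F} (hE : E' ⊆ E) (h : SepExt p C E) :
    SepExt p C E' := fun n x hx hind d hdC hsum i =>
  h n x (fun j => hE (hx j)) hind d hdC hsum i

section Seq

theorem closure_union_closure_middle (s t u : Set F) :
    Subfield.closure (s ∪ ↑(Subfield.closure t) ∪ u) = Subfield.closure (s ∪ t ∪ u) := by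
  apply le_antisymm
  · rw [Subfield.closure_le]
    intro z hz
    rcases hz with (hz | hz) | hz
    · exact Subfield.subset_closure (Or.inl (Or.inl hz))
    · exact Subfield.closure_mono (fun w hw => Or.inl (Or.inr hw)) hz
    · exact Subfield.subset_closure (Or.inr hz)
  · apply Subfield.closure_mono
    intro z hz
    rcases hz with (hz | hz) | hz
    · exact Or.inl (Or.inl hz)
    · exact Or.inl (Or.inr (Subfield.subset_closure hz))
    · exact Or.inr hz

variable {p : ℕ} {C : Subfield F} {c a : Set F} {A B : ℕ → Set F} {r : ℕ → F → F → Prop}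
variable (hdata : IsSplitSeq p (C : Set F) c a A B r)
include hdata

theorem seq_step (n : ℕ) : ∃ s ⊆ B n,
    (∀ x ∈ B n, x ∈ s ↔
        x ∉ pSpan p ↑(Subfield.closure ((C : Set F) ∪ A n)) (s ∩ {y | r n y x})) ∧
      A (n + 1) = A n ∪ s ∧ B (n + 1) = B n ∪ lambdaSet p (c ∪ A (n + 1)) (B n) :=
  hdata.step n

theorem seq_A_mono {m n : ℕ} (h : m ≤ n) : A m ⊆ A n := by
  induction n with
  | zero => rw [Nat.le_zero.mp h]
  | succ n ih =>
    rcases Nat.le_succ_iff.mp h with h' | rfl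
    · obtain ⟨s, _, _, hA, _⟩ := seq_step hdata n
      exact (ih h').trans (hA ▸ Set.subset_union_left)
    · rfl

theorem seq_B_mono {m n : ℕ} (h : m ≤ n) : B m ⊆ B n := by
  induction n with
  | zero => rw [Nat.le_zero.mp h]
  | succ n ih =>
    rcases Nat.le_succ_iff.mp h with h' | rfl
    · exact (ih h').trans (hdata.mono n)
    · rfl

theorem seq_pSpan_eq (n : ℕ) (Y : Set F) :
    pSpan p (↑(Subfield.closure ((C : Set F) ∪ A n))) Y
      = Subfield.closure (pPowers p F ∪ ((C : Set F) ∪ A n) ∪ Y) :=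
  closure_union_closure_middle _ _ _

/-- a new element of `A (n+1)` comes from `B n` and avoids the old subfield -/
theorem seq_new (n : ℕ) {x : F} (hx : x ∈ A (n + 1)) (hx' : x ∉ A n) :
    x ∈ B n ∧ x ∉ Subfield.closure ((C : Set F) ∪ A n) := by
  obtain ⟨s, hsB, hchar, hA, _⟩ := seq_step hdata n
  rw [hA] at hx
  rcases hx with hx | hx
  · exact absurd hx hx'
  · refine ⟨hsB hx, fun hmem => ?_⟩
    have := (hchar x (hsB hx)).mp hx
    apply this
    apply Subfield.subset_closure
    exact Or.inl (Or.inr hmem)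

theorem seq_c_disj (n : ℕ) {x : F} (hx : x ∈ c) (hc : c ⊆ (C : Set F)) : x ∉ A n := by
  induction n with
  | zero => rw [hdata.initA]; exact Set.notMem_empty x
  | succ n ih =>
    intro hxA
    exact (seq_new hdata n hxA ih).2 (Subfield.subset_closure (Or.inl (hc hx)))

theorem seq_A_not_old (n : ℕ) {x : F} (hx : x ∈ A n) :
    x ∉ A (n + 1) → False := fun h => h (seq_A_mono hdata (Nat.le_succ n) hx)

/-- elements of `B n` lie in the p-span of `c ∪ A (n+1)` over the prime field -/
theorem seq_B_in_span (n : ℕ) (hc : c ⊆ (C : Set F))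
    (hcs : (C : Set F) ⊆ ↑(Subfield.closure (pPowers p F ∪ c))) :
    B n ⊆ ↑(pSpan p ∅ (c ∪ A (n + 1))) := by
  obtain ⟨s, hsB, hchar, hA, _⟩ := seq_step hdata n
  intro x hx
  have hsub : (Subfield.closure (pPowers p F ∪ ((C : Set F) ∪ A n) ∪ (s ∩ {y | r n y x})))
      ≤ pSpan p ∅ (c ∪ A (n + 1)) := by
    rw [Subfield.closure_le]
    intro z hz
    rcases hz with (hz | (hz | hz)) | hz
    · exact Subfield.subset_closure (Or.inl (Or.inl hz))
    · -- z ∈ C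
      apply Subfield.closure_mono (fun w hw => ?_) (hcs hz)
      rcases hw with hw | hw
      · exact Or.inl (Or.inl hw)
      · exact Or.inr (Or.inl hw)
    · -- z ∈ A n
      exact Subfield.subset_closure (Or.inr (Or.inr (seq_A_mono hdata (Nat.le_succ n) hz)))
    · -- z ∈ s ∩ pred
      exact Subfield.subset_closure (Or.inr (Or.inr (hA ▸ Or.inr hz.1)))
  by_cases hxs : x ∈ s
  · exact Subfield.subset_closure (Or.inr (Or.inr (hA ▸ Or.inr hxs)))
  · have := (hchar x hx).not.mp hxs
    rw [not_not] at this
    rw [seq_pSpan_eq hdata n] at this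
    exact hsub this

end Seq

section Seq2

theorem pPow_top {p : ℕ} : pPow p ((⊤ : Subfield F) : Set F) = pPowers p F := by
  rw [Subfield.coe_top, pPow, Set.image_univ]
  rfl

/-- monomial independence restricts to subsets -/
theorem monomIndep_mono {p : ℕ} (hp0 : p ≠ 0) (K : Subfield F) {S X : Set F} (hSX : S ⊆ X)
    (hm : MonomIndep p K X) : MonomIndep p K S := by
  classical
  intro T hT y hy hsum I0 hI0
  set e : ↥S ↪ ↥X := ⟨fun s => ⟨s.1, hSX s.2⟩, by
    intro a b h
    apply Subtype.ext
    have h2 := congrArg Subtype.val h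
    exact h2⟩ with he
  set Emb : (↥S →₀ ℕ) ↪ (↥X →₀ ℕ) := ⟨fun I => I.embDomain e,
    Finsupp.embDomain_injective e⟩ with hEmb
  set T' : Finset (↥X →₀ ℕ) := T.map Emb with hT'
  set y' : (↥X →₀ ℕ) → F := fun J => if h : ∃ I, Emb I = J then y h.choose else 0 with hy'
  have hval : ∀ I : ↥S →₀ ℕ, y' (Emb I) = y I := by
    intro I
    have hex : ∃ I', Emb I' = Emb I := ⟨I, rfl⟩
    rw [hy']
    dsimp only
    rw [dif_pos hex]
    congr 1
    exact Emb.injective hex.choose_spec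
  have hmon : ∀ I : ↥S →₀ ℕ, mon X (Emb I) = mon S I := fun I => Finsupp.prod_embDomain
  have hent' : ∀ J ∈ T', ∀ t, J t < p := by
    intro J hJ t
    obtain ⟨I, hI, rfl⟩ := Finset.mem_map.mp hJ
    by_cases ht : (Emb I : ↥X →₀ ℕ) t = 0
    · rw [ht]; exact Nat.pos_of_ne_zero hp0
    · have : t ∈ (Emb I : ↥X →₀ ℕ).support := Finsupp.mem_support_iff.mpr ht
      rw [show (Emb I : ↥X →₀ ℕ) = Finsupp.embDomain e I from rfl,
        Finsupp.support_embDomain, Finset.mem_map] at this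
      obtain ⟨s', _, rfl⟩ := this
      have h8 : (Finsupp.embDomain e I) (e s') = I s' := Finsupp.embDomain_apply_self e I s'
      have h9 : (Emb I : ↥X →₀ ℕ) (e s') = I s' := h8
      rw [h9]
      exact hT I hI s'
  have hy'K : ∀ J ∈ T', y' J ∈ K := by
    intro J hJ
    obtain ⟨I, hI, rfl⟩ := Finset.mem_map.mp hJ
    rw [hval I]
    exact hy I hI
  have hsum' : ∑ J ∈ T', mon X J * (y' J) ^ p = 0 := by
    rw [hT', Finset.sum_map]
    rw [← hsum]
    apply Finset.sum_congr rfl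
    intro I _
    rw [hval I, hmon I]
  have := hm T' hent' y' hy'K hsum' (Emb I0) (Finset.mem_map_of_mem Emb hI0)
  rw [hval I0] at this
  exact this

variable {p : ℕ} {C : Subfield F} {c a : Set F} {A B : ℕ → Set F} {r : ℕ → F → F → Prop}
variable (hpp : p.Prime) [CharP F p]
variable (hdata : IsSplitSeq p (C : Set F) c a A B r)
variable (hsep : SepExt p (C : Set F) (Set.univ : Set F))
variable (hc : PBasisOfSet p (C : Set F) ∅ c)

/-- the level of an element of `⋃ A n` -/
noncomputable def lvl (A : ℕ → Set F) (x : F) : ℕ :=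
  if h : ∃ n, x ∈ A n then Nat.find h else 0

include hdata

theorem lvl_c {x : F} (hx : x ∈ c) (hcC : c ⊆ (C : Set F)) : lvl A x = 0 := by
  rw [lvl, dif_neg]
  rintro ⟨n, hn⟩
  exact seq_c_disj hdata n hx hcC hn

theorem lvl_spec {x : F} (hx : ∃ n, x ∈ A n) :
    x ∈ A (lvl A x) ∧ 0 < lvl A x ∧ x ∉ A (lvl A x - 1) := by
  rw [lvl, dif_pos hx]
  refine ⟨Nat.find_spec hx, ?_, ?_⟩
  · rcases Nat.eq_zero_or_pos (Nat.find hx) with h | h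
    · exfalso
      have := Nat.find_spec hx
      rw [h, hdata.initA] at this
      exact this
    · exact h
  · intro hmem
    exact Nat.find_min hx (by
      have hfpos : 0 < Nat.find hx := by
        rcases Nat.eq_zero_or_pos (Nat.find hx) with h | h
        · exfalso
          have := Nat.find_spec hx
          rw [h, hdata.initA] at this
          exact this
        · exact h
      omega) hmem

omit hdata in
theorem lvl_le {x : F} {n : ℕ} (hxn : x ∈ A n) : lvl A x ≤ n := by
  rw [lvl, dif_pos ⟨n, hxn⟩]
  exact Nat.find_min' _ hxn

end Seq2

section Seq3

variable {p : ℕ} {C : Subfield F} {c a : Set F} {A B : ℕ → Set F} {r : ℕ → F → F → Prop}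
variable (hpp : p.Prime) [CharP F p]
variable (hdata : IsSplitSeq p (C : Set F) c a A B r)
variable (hsep : SepExt p (C : Set F) (Set.univ : Set F))
variable (hc : PBasisOfSet p (C : Set F) ∅ c)

/-- the combined well-order on `c ∪ ⋃ A n` -/
def glob (A : ℕ → Set F) (r : ℕ → F → F → Prop) : F → F → Prop := fun x y =>
  lvl A x < lvl A y ∨ (lvl A x = lvl A y ∧
    ((lvl A y = 0 ∧ WellOrderingRel x y) ∨ (0 < lvl A y ∧ r (lvl A y - 1) x y)))

theorem pPow_subset_pPowers {K : Subfield F} : pPow p (K : Set F) ⊆ pPowers p F := by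
  rintro z ⟨w, _, rfl⟩
  exact ⟨w, rfl⟩

theorem C_subset_pc (hc : PBasisOfSet p (C : Set F) ∅ c) :
    (C : Set F) ⊆ ↑(Subfield.closure (pPowers p F ∪ c)) := by
  intro z hz
  refine Subfield.closure_mono ?_ (hc.2.2 hz)
  intro w hw
  rcases hw with (hw | hw) | hw
  · exact Or.inl (pPow_subset_pPowers hw)
  · exact absurd hw (Set.notMem_empty w)
  · exact Or.inr hw

theorem c_monomIndep_C (hsep : SepExt p (C : Set F) (Set.univ : Set F))
    (hc : PBasisOfSet p (C : Set F) ∅ c) (hpp : p.Prime) [CharP F p] :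
    MonomIndep p ⊤ c := by
  apply monomIndep_top_of_sep hpp C hsep c hc.1
  apply monomIndep_of_pred hpp C c hc.1 WellOrderingRel
  · exact fun x _ y _ z _ h1 h2 => _root_.trans h1 h2
  · intro x _ y _
    rcases trichotomous (r := WellOrderingRel) x y with h | h | h
    · exact Or.inr (Or.inl h)
    · exact Or.inl h
    · exact Or.inr (Or.inr h)
  · intro t ht hmem
    apply hc.2.1 t ht
    refine Subfield.closure_mono ?_ hmem
    intro w hw
    rcases hw with hw | hw
    · exact Or.inl (Or.inl hw)
    · refine Or.inr ⟨hw.1, ?_⟩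
      intro he
      rw [Set.mem_singleton_iff] at he
      subst he
      exact irrefl w hw.2

theorem c_elem_indep (hsep : SepExt p (C : Set F) (Set.univ : Set F))
    (hc : PBasisOfSet p (C : Set F) ∅ c) (hpp : p.Prime) [CharP F p] :
    ∀ t ∈ c, t ∉ Subfield.closure (pPowers p F ∪ (c \ {t})) := by
  intro t ht
  have := elem_of_monomIndep hpp ⊤ c (fun x _ => Subfield.mem_top x)
    (c_monomIndep_C hsep hc hpp) t ht
  rwa [pPow_top] at this

include hdata

/-- membership analysis for the combined set -/
theorem seq_W_cases (hcC : c ⊆ (C : Set F)) {x : F} (hx : x ∈ c ∪ ⋃ n, A n) :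
    (x ∈ c ∧ lvl A x = 0) ∨
    (0 < lvl A x ∧ x ∈ A (lvl A x) ∧ x ∉ A (lvl A x - 1) ∧ x ∈ B (lvl A x - 1) ∧
      x ∉ Subfield.closure ((C : Set F) ∪ A (lvl A x - 1))) := by
  rcases hx with hx | hx
  · exact Or.inl ⟨hx, lvl_c hdata hx hcC⟩
  · rw [Set.mem_iUnion] at hx
    obtain ⟨hA, hpos, hnot⟩ := lvl_spec hdata hx
    have heq : lvl A x - 1 + 1 = lvl A x := by omega
    have hnew := seq_new hdata (lvl A x - 1) (by rw [heq]; exact hA) hnot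
    exact Or.inr ⟨hpos, hA, hnot, hnew.1, hnew.2⟩

theorem glob_trans_on (hcC : c ⊆ (C : Set F)) :
    ∀ x ∈ c ∪ ⋃ n, A n, ∀ y ∈ c ∪ ⋃ n, A n, ∀ z ∈ c ∪ ⋃ n, A n,
      glob A r x y → glob A r y z → glob A r x z := by
  intro x hx y hy z hz hxy hyz
  rcases hxy with h1 | ⟨he1, hi1⟩
  · rcases hyz with h2 | ⟨he2, _⟩
    · exact Or.inl (h1.trans h2)
    · exact Or.inl (he2 ▸ h1)
  · rcases hyz with h2 | ⟨he2, hi2⟩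
    · exact Or.inl (he1 ▸ h2)
    · refine Or.inr ⟨he1.trans he2, ?_⟩
      rcases hi1 with ⟨hy0, hw1⟩ | ⟨hypos, hr1⟩
      · rcases hi2 with ⟨hz0, hw2⟩ | ⟨hzpos, hr2⟩
        · exact Or.inl ⟨hz0, _root_.trans hw1 hw2⟩
        · exfalso; omega
      · rcases hi2 with ⟨hz0, hw2⟩ | ⟨hzpos, hr2⟩
        · exfalso; omega
        · refine Or.inr ⟨hzpos, ?_⟩
          have hm : lvl A y = lvl A z := he2
          have hmx : lvl A x = lvl A z := he1.trans he2
          -- x, y, z all lie in B (lvl A z - 1)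
          have hxB : x ∈ B (lvl A z - 1) := by
            rcases seq_W_cases hdata hcC hx with ⟨_, h0⟩ | ⟨hpos, _, _, hB, _⟩
            · omega
            · rw [← hmx]; exact hB
          have hyB : y ∈ B (lvl A z - 1) := by
            rcases seq_W_cases hdata hcC hy with ⟨_, h0⟩ | ⟨hpos, _, _, hB, _⟩
            · omega
            · rw [← hm]; exact hB
          have hzB : z ∈ B (lvl A z - 1) := by
            rcases seq_W_cases hdata hcC hz with ⟨_, h0⟩ | ⟨hpos, _, _, hB, _⟩
            · omega
            · exact hB
          have hr1' : r (lvl A z - 1) x y := by rw [← hm]; exact hr1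
          exact hdata.trans _ x hxB y hyB z hzB hr1' hr2

theorem glob_total_on (hcC : c ⊆ (C : Set F)) :
    ∀ x ∈ c ∪ ⋃ n, A n, ∀ y ∈ c ∪ ⋃ n, A n, x = y ∨ glob A r x y ∨ glob A r y x := by
  intro x hx y hy
  rcases Nat.lt_trichotomy (lvl A x) (lvl A y) with h | h | h
  · exact Or.inr (Or.inl (Or.inl h))
  · rcases seq_W_cases hdata hcC hx with ⟨hxc, hx0⟩ | ⟨hxpos, _, _, hxB, _⟩
    · rcases seq_W_cases hdata hcC hy with ⟨hyc, hy0⟩ | ⟨hypos, _, _, _, _⟩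
      · rcases trichotomous (r := WellOrderingRel) x y with hw | hw | hw
        · exact Or.inr (Or.inl (Or.inr ⟨h, Or.inl ⟨hy0, hw⟩⟩))
        · exact Or.inl hw
        · exact Or.inr (Or.inr (Or.inr ⟨h.symm, Or.inl ⟨hx0, hw⟩⟩))
      · omega
    · rcases seq_W_cases hdata hcC hy with ⟨hyc, hy0⟩ | ⟨hypos, _, _, hyB, _⟩
      · omega
      · have hm : lvl A y - 1 = lvl A x - 1 := by omega
        rcases hdata.total (lvl A y - 1) x (hm ▸ hxB) y hyB with he | hr | hr
        · exact Or.inl he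
        · exact Or.inr (Or.inl (Or.inr ⟨h, Or.inr ⟨hypos, hr⟩⟩))
        · exact Or.inr (Or.inr (Or.inr ⟨h.symm, Or.inr ⟨by omega, by
            rw [show lvl A x - 1 = lvl A y - 1 from by omega]; exact hr⟩⟩))
  · exact Or.inr (Or.inr (Or.inl h))

end Seq3

section Seq4

variable {p : ℕ} {C : Subfield F} {c a : Set F} {A B : ℕ → Set F} {r : ℕ → F → F → Prop}
variable (hpp : p.Prime) [CharP F p]
variable (hdata : IsSplitSeq p (C : Set F) c a A B r)
variable (hsep : SepExt p (C : Set F) (Set.univ : Set F))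
variable (hc : PBasisOfSet p (C : Set F) ∅ c)
include hpp hdata hsep hc

theorem glob_pred :
    ∀ t ∈ c ∪ ⋃ n, A n, t ∉ Subfield.closure
      (pPowers p F ∪ {y | y ∈ (c ∪ ⋃ n, A n) ∧ glob A r y t}) := by
  intro t ht hmem
  rcases seq_W_cases hdata hc.1 ht with ⟨htc, ht0⟩ | ⟨htpos, htA, htnA, htB, _⟩
  · apply c_elem_indep hsep hc hpp t htc
    refine Subfield.closure_mono ?_ hmem
    intro w hw
    rcases hw with hw | ⟨hwW, hglob⟩
    · exact Or.inl hw
    · rcases hglob with h | ⟨he, hin⟩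
      · omega
      · rcases hin with ⟨_, hwor⟩ | ⟨hpos, _⟩
        · have hwc : w ∈ c := by
            rcases seq_W_cases hdata hc.1 hwW with ⟨hwc, _⟩ | ⟨hwpos, _, _, _, _⟩
            · exact hwc
            · omega
          refine Or.inr ⟨hwc, fun hwt => ?_⟩
          rw [Set.mem_singleton_iff] at hwt
          subst hwt
          exact irrefl w hwor
        · omega
  · obtain ⟨s, hsB, hchar, hA, _⟩ := seq_step hdata (lvl A t - 1)
    have heq1 : lvl A t - 1 + 1 = lvl A t := by omega
    have hts : t ∈ s := by
      have : t ∈ A (lvl A t - 1) ∪ s := by rw [← hA, heq1]; exact htA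
      rcases this with h | h
      · exact absurd h htnA
      · exact h
    have hnot := (hchar t htB).mp hts
    rw [seq_pSpan_eq hdata] at hnot
    apply hnot
    refine Subfield.closure_mono ?_ hmem
    intro w hw
    rcases hw with hw | ⟨hwW, hglob⟩
    · exact Or.inl (Or.inl hw)
    · rcases hglob with hlt | ⟨he, hin⟩
      · -- lower level
        rcases seq_W_cases hdata hc.1 hwW with ⟨hwc, _⟩ | ⟨hwpos, hwA, _, _, _⟩
        · exact Or.inl (Or.inr (Or.inl (hc.1 hwc)))
        · refine Or.inl (Or.inr (Or.inr ?_))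
          exact seq_A_mono hdata (by omega : lvl A w ≤ lvl A t - 1) hwA
      · rcases hin with ⟨h0, _⟩ | ⟨hpos, hrw⟩
        · omega
        · -- same level: w ∈ s and r _ w t
          have hws : w ∈ s := by
            rcases seq_W_cases hdata hc.1 hwW with ⟨_, h0⟩ | ⟨hwpos, hwA, hwnA, _, _⟩
            · omega
            · have : w ∈ A (lvl A t - 1) ∪ s := by
                rw [← hA, heq1, ← he]
                exact hwA
              rcases this with h | h
              · exact absurd (show w ∈ A (lvl A w - 1) from by rw [he]; exact h) hwnA
              · exact h
          exact Or.inr ⟨hws, hrw⟩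

theorem seq_monomIndep_W : MonomIndep p ⊤ (c ∪ ⋃ n, A n) := by
  apply monomIndep_of_pred hpp ⊤ _ (fun x _ => Subfield.mem_top x) (glob A r)
    (glob_trans_on hdata hc.1) (glob_total_on hdata hc.1)
  intro t ht
  rw [pPow_top]
  exact glob_pred hpp hdata hsep hc t ht

theorem seq_W_elem :
    ∀ x ∈ c ∪ ⋃ n, A n,
      x ∉ Subfield.closure (pPowers p F ∪ ((c ∪ ⋃ n, A n) \ {x})) := by
  intro x hx
  have := elem_of_monomIndep hpp ⊤ _ (fun z _ => Subfield.mem_top z)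
    (seq_monomIndep_W hpp hdata hsep hc) x hx
  rwa [pPow_top] at this

end Seq4

section Lambda

theorem lambdaFam_eq {p : ℕ} {S : Set F} {b : F} (h : ∃ l, IsLambdaFam p S b l) :
    lambdaFam p S b = ⇑h.choose := by
  rw [lambdaFam, dif_pos h]

variable {p : ℕ} (hpp : p.Prime) [CharP F p]
include hpp

theorem lambda_exists (S : Set F) {b : F} (hb : b ∈ pSpan p ∅ S) :
    ∃ l, IsLambdaFam p S b l := by
  have hb' : b ∈ Subfield.closure (pPow p ((⊤ : Subfield F) : Set F) ∪ S) := by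
    rw [pPow_top]
    rw [pSpan, Set.union_empty] at hb
    exact hb
  obtain ⟨l, hent, _, heq⟩ := rep_of_mem_closure hpp.ne_zero hpp
    (fun z _ => Subfield.mem_top z) hb'
  exact ⟨l, hent, heq⟩

theorem lambda_sum_mem {S : Set F} {b : F} (hb : ∃ l, IsLambdaFam p S b l)
    (V : Subfield F) (hS : S ⊆ ↑V)
    (hv : ∀ y ∈ lambdaVals p S b, y ^ p ∈ V) : b ∈ V := by
  obtain ⟨hent, heq⟩ := hb.choose_spec
  rw [heq, Finsupp.sum]
  apply sum_mem
  intro I hI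
  apply V.mul_mem
  · exact prod_mem fun t _ => V.pow_mem (hS t.2) _
  · apply hv
    exact ⟨I, hent I hI, by rw [lambdaFam_eq hb]⟩

/-- lambda values of an element of `D` lie in `D`, for `F/D` separable -/
theorem lambda_vals_mem_of_sep (D : Subfield F)
    (hDsep : SepExt p (D : Set F) (Set.univ : Set F)) (S : Set F) (hSD : S ⊆ ↑D)
    (hSmono : MonomIndep p ⊤ S) {b : F} (hbD : b ∈ D)
    (hb : ∃ l, IsLambdaFam p S b l) : ∀ y ∈ lambdaVals p S b, y ∈ D := by
  haveI : Fact p.Prime := ⟨hpp⟩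
  classical
  set l := hb.choose with hldef
  obtain ⟨hent, heq⟩ := hb.choose_spec
  -- decompose the values of l over D
  set m := l.support.card with hmdef
  set σ := l.support.equivFin with hσ
  obtain ⟨k, g, hind, hdec⟩ := exists_decomp D m (fun i => l (σ.symm i : ↥l.support))
  choose e0 e he0 he heqd using hdec
  set G : Fin (k + 1) → F := Fin.cons 1 g with hG
  set E : (↥S →₀ ℕ) → Fin (k + 1) → F := fun I =>
    if h : I ∈ l.support then Fin.cons (e0 (σ ⟨I, h⟩)) (e (σ ⟨I, h⟩)) else 0 with hE
  have hlEG : ∀ I (h : I ∈ l.support), l I = ∑ j, E I j * G j := by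
    intro I h
    have h1 : l I = e0 (σ ⟨I, h⟩) + ∑ j, e (σ ⟨I, h⟩) j * g j := by
      have := heqd (σ ⟨I, h⟩)
      rwa [Equiv.symm_apply_apply] at this
    rw [h1, hE, hG, Fin.sum_univ_succ]
    simp only [dif_pos h, Fin.cons_zero, Fin.cons_succ, one_mul]
    rw [mul_one]
  have hED : ∀ I j, E I j ∈ D := by
    intro I j
    rw [hE]
    dsimp only
    split
    · rcases Fin.eq_zero_or_eq_succ j with rfl | ⟨j', rfl⟩
      · rw [Fin.cons_zero]; exact he0 _
      · rw [Fin.cons_succ]; exact he _ _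
    · exact D.zero_mem
  -- the relation over D
  set d : Fin (k + 1) → F := fun j =>
    if j = 0 then (∑ I ∈ l.support, mon S I * (E I 0) ^ p) - b
    else ∑ I ∈ l.support, mon S I * (E I j) ^ p with hd
  have hdD : ∀ j, d j ∈ (D : Set F) := by
    intro j
    have hsD : ∀ j', (∑ I ∈ l.support, mon S I * (E I j') ^ p) ∈ D := by
      intro j'
      apply sum_mem
      intro I _
      exact D.mul_mem (mon_mem hSD I) (D.pow_mem (hED I j') p)
    rw [hd]
    dsimp only
    split
    · exact D.sub_mem (hsD 0) hbD
    · exact hsD j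
  have hrel : ∑ j, d j * G j ^ p = 0 := by
    have hb2 : b = ∑ j, (∑ I ∈ l.support, mon S I * (E I j) ^ p) * G j ^ p := by
      calc b = ∑ I ∈ l.support, mon S I * (l I) ^ p := by rw [heq]; rfl
        _ = ∑ I ∈ l.support, ∑ j, mon S I * (E I j) ^ p * G j ^ p := by
            apply Finset.sum_congr rfl
            intro I hI
            rw [hlEG I hI,
              show (∑ j, E I j * G j) ^ p = (frobenius F p) (∑ j, E I j * G j) from rfl,
              map_sum, Finset.mul_sum]
            apply Finset.sum_congr rfl
            intro j _
            rw [show (frobenius F p) (E I j * G j) = (E I j * G j) ^ p from rfl, mul_pow]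
            ring
        _ = ∑ j, ∑ I ∈ l.support, mon S I * (E I j) ^ p * G j ^ p := Finset.sum_comm
        _ = ∑ j, (∑ I ∈ l.support, mon S I * (E I j) ^ p) * G j ^ p := by
            apply Finset.sum_congr rfl
            intro j _
            rw [Finset.sum_mul]
    rw [Fin.sum_univ_succ] at hb2
    rw [Fin.sum_univ_succ]
    rw [hd]
    dsimp only
    rw [if_pos rfl]
    have hG0 : G 0 = 1 := by rw [hG, Fin.cons_zero]
    rw [hG0, one_pow, mul_one] at hb2 ⊢
    have : ∀ j : Fin k, (if (j.succ : Fin (k+1)) = 0 then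
        (∑ I ∈ l.support, mon S I * (E I 0) ^ p) - b
        else ∑ I ∈ l.support, mon S I * (E I j.succ) ^ p) * G j.succ ^ p
        = (∑ I ∈ l.support, mon S I * (E I j.succ) ^ p) * G j.succ ^ p := by
      intro j
      rw [if_neg (Fin.succ_ne_zero j)]
    rw [Finset.sum_congr rfl (fun j _ => this j)]
    rw [sub_add_eq_add_sub, sub_eq_zero]
    exact hb2.symm
  have hGind : ∀ dd : Fin (k + 1) → F, (∀ i, dd i ∈ (D : Set F)) →
      (∑ i, dd i * G i) = 0 → ∀ i, dd i = 0 := by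
    intro dd hdd hds
    rw [hG, Fin.sum_univ_succ, Fin.cons_zero, mul_one] at hds
    have := hind (dd 0) (fun j => dd j.succ) (hdd 0) (fun j => hdd _) (by
      rw [← hds]
      apply congrArg
      apply Finset.sum_congr rfl
      intro j _
      rw [Fin.cons_succ])
    intro i
    rcases Fin.eq_zero_or_eq_succ i with rfl | ⟨j, rfl⟩
    · exact this.1
    · exact this.2 j
  have hd0 : ∀ j, d j = 0 := hDsep (k + 1) G (fun _ => trivial) hGind d hdD hrel
  -- extract that nonconstant coefficients vanish
  have hE0 : ∀ j : Fin k, ∀ I ∈ l.support, E I j.succ = 0 := by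
    intro j
    apply hSmono l.support (fun I hI => hent I hI) (fun I => E I j.succ)
      (fun I _ => trivial)
    have := hd0 j.succ
    rw [hd] at this
    dsimp only at this
    rw [if_neg (Fin.succ_ne_zero j)] at this
    exact this
  -- conclude each value lies in D
  have hlD : ∀ I, l I ∈ D := by
    intro I
    by_cases hI : I ∈ l.support
    · rw [hlEG I hI, Fin.sum_univ_succ]
      have hz : ∀ j : Fin k, E I j.succ * G j.succ = 0 := by
        intro j
        rw [hE0 j I hI, zero_mul]
      rw [Finset.sum_congr rfl (fun j _ => hz j), Finset.sum_const_zero, add_zero,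
        hG, Fin.cons_zero, mul_one]
      exact hED I 0
    · rw [Finsupp.notMem_support_iff.mp hI]
      exact D.zero_mem
  intro y hy
  obtain ⟨I, _, rfl⟩ := hy
  rw [lambdaFam_eq hb]
  exact hlD I

end Lambda

section Assembly

theorem pPow_mono {p : ℕ} {S T : Set F} (h : S ⊆ T) : pPow p S ⊆ pPow p T :=
  Set.image_mono h

theorem pPow_self {p : ℕ} (K : Subfield F) : pPow p (K : Set F) ⊆ (K : Set F) := by
  rintro z ⟨w, hw, rfl⟩
  exact K.pow_mem hw p

variable {p : ℕ} {C : Subfield F} {c a : Set F} {A B : ℕ → Set F} {r : ℕ → F → F → Prop}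
variable (hpp : p.Prime) [CharP F p]
variable (hdata : IsSplitSeq p (C : Set F) c a A B r)
variable (hsep : SepExt p (C : Set F) (Set.univ : Set F))
variable (hc : PBasisOfSet p (C : Set F) ∅ c)
include hpp hdata hsep hc

theorem seq_lambdaVals_in_B (n : ℕ) {b : F} (hb : b ∈ B n) :
    ∀ y ∈ lambdaVals p (c ∪ A (n + 1)) b, y ∈ B (n + 1) := by
  intro y hy
  obtain ⟨s, hsB, hchar, hA, hB⟩ := seq_step hdata n
  rw [hB]
  refine Or.inr ⟨b, ⟨hb, ?_⟩, hy⟩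
  exact seq_B_in_span hdata n hc.1 (C_subset_pc hc) hb

theorem statement11_prime :
    (∀ D : Subfield F, IsLambdaClosure p ((C : Set F) ∪ a) D →
      D = Subfield.closure ((C : Set F) ∪ ((⋃ n, A n) ∪ ⋃ n, B n))) ∧
    PBasisOfSet p (Subfield.closure ((C : Set F) ∪ ⋃ n, A n) : Set F)
      (C : Set F) (⋃ n, A n) ∧
    PBasisOfSet p (Subfield.closure ((C : Set F) ∪ ((⋃ n, A n) ∪ ⋃ n, B n)) : Set F)
      (C : Set F) (⋃ n, A n) ∧
    SeparatedExt p (Subfield.closure ((C : Set F) ∪ ⋃ n, A n) : Set F)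
      (Subfield.closure ((C : Set F) ∪ ((⋃ n, A n) ∪ ⋃ n, B n)) : Set F) ∧
    SepExt p (Subfield.closure ((C : Set F) ∪ ⋃ n, A n) : Set F) (Set.univ : Set F) ∧
    SepExt p (Subfield.closure ((C : Set F) ∪ ((⋃ n, A n) ∪ ⋃ n, B n)) : Set F)
      (Set.univ : Set F) := by
  classical
  set Aw : Set F := ⋃ n, A n with hAw
  set Bw : Set F := ⋃ n, B n with hBw
  set W : Set F := c ∪ Aw with hW
  set D1 : Subfield F := Subfield.closure ((C : Set F) ∪ Aw) with hD1
  set D2 : Subfield F := Subfield.closure ((C : Set F) ∪ (Aw ∪ Bw)) with hD2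
  have hWmono : MonomIndep p ⊤ W := seq_monomIndep_W hpp hdata hsep hc
  have hWel := seq_W_elem hpp hdata hsep hc
  have hcC : c ⊆ (C : Set F) := hc.1
  have hCc := C_subset_pc (p := p) hc
  have hlamex : ∀ n, ∀ b ∈ B n, ∃ l, IsLambdaFam p (c ∪ A (n + 1)) b l := fun n b hb =>
    lambda_exists hpp _ (seq_B_in_span hdata n hcC hCc hb)
  have hSW : ∀ n, c ∪ A (n + 1) ⊆ W := by
    intro n x hx
    rcases hx with hx | hx
    · exact Or.inl hx
    · exact Or.inr (Set.mem_iUnion.mpr ⟨n + 1, hx⟩)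
  have hCD1 : (C : Set F) ⊆ ↑D1 := fun z hz => Subfield.subset_closure (Or.inl hz)
  have hAD1 : Aw ⊆ ↑D1 := fun z hz => Subfield.subset_closure (Or.inr hz)
  have hWD1 : W ⊆ ↑D1 := by
    intro z hz
    rcases hz with hz | hz
    · exact hCD1 (hcC hz)
    · exact hAD1 hz
  have hD1D2 : D1 ≤ D2 := by
    apply Subfield.closure_mono
    intro z hz
    rcases hz with hz | hz
    · exact Or.inl hz
    · exact Or.inr (Or.inl hz)
  have hCD2 : (C : Set F) ⊆ ↑D2 := fun z hz => Subfield.subset_closure (Or.inl hz)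
  have hAD2 : Aw ⊆ ↑D2 := fun z hz => Subfield.subset_closure (Or.inr (Or.inl hz))
  have hBD2 : ∀ n, B n ⊆ ↑D2 := fun n z hz =>
    Subfield.subset_closure (Or.inr (Or.inr (Set.mem_iUnion.mpr ⟨n, hz⟩)))
  have hWD2 : W ⊆ ↑D2 := hWD1.trans (fun z hz => hD1D2 hz)
  have hAsubW : ∀ n, A n ⊆ W := fun n z hz => Or.inr (Set.mem_iUnion.mpr ⟨n, hz⟩)
  have hAwnotc : ∀ x ∈ Aw, x ∉ c := by
    intro x hx hxc
    rw [hAw, Set.mem_iUnion] at hx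
    obtain ⟨n, hn⟩ := hx
    exact seq_c_disj hdata n hxc hcC hn
  -- (iv-a)
  have hsepD1 : SepExt p (D1 : Set F) (Set.univ : Set F) := by
    apply sepext_of_monomIndep hpp D1 W hWD1 hWmono
    refine SetLike.coe_subset_coe.mpr ?_
    rw [hD1, Subfield.closure_le]
    intro z hz
    rcases hz with hz | hz
    · refine Subfield.closure_mono ?_ (hc.2.2 hz)
      intro w hw
      rcases hw with (hw | hw) | hw
      · exact Or.inl (pPow_mono (by exact hCD1) hw)
      · exact absurd hw (Set.notMem_empty w)
      · exact Or.inr (Or.inl hw)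
    · exact Subfield.subset_closure (Or.inr (Or.inr hz))
  -- (iv-b)
  have hsepD2 : SepExt p (D2 : Set F) (Set.univ : Set F) := by
    apply sepext_of_monomIndep hpp D2 W hWD2 hWmono
    refine SetLike.coe_subset_coe.mpr ?_
    rw [hD2, Subfield.closure_le]
    intro z hz
    rcases hz with hz | (hz | hz)
    · refine Subfield.closure_mono ?_ (hc.2.2 hz)
      intro w hw
      rcases hw with (hw | hw) | hw
      · exact Or.inl (pPow_mono (by exact hCD2) hw)
      · exact absurd hw (Set.notMem_empty w)
      · exact Or.inr (Or.inl hw)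
    · exact Subfield.subset_closure (Or.inr (Or.inr hz))
    · -- z ∈ Bw
      rw [hBw, Set.mem_iUnion] at hz
      obtain ⟨n, hn⟩ := hz
      apply lambda_sum_mem hpp (hlamex n z hn)
      · exact fun w hw => Subfield.subset_closure (Or.inr (hSW n hw))
      · intro y hy
        have hyB : y ∈ B (n + 1) := seq_lambdaVals_in_B hpp hdata hsep hc n hn y hy
        exact Subfield.subset_closure (Or.inl ⟨y, hBD2 (n + 1) hyB, rfl⟩)
  -- (ii) independence, shared
  have hindep : ∀ (V : Subfield F), ∀ x ∈ Aw,
      x ∉ Subfield.closure (pPow p (V : Set F) ∪ (C : Set F) ∪ (Aw \ {x})) := by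
    intro V x hx hmem
    apply hWel x (Or.inr hx)
    refine SetLike.le_def.mp ?_ hmem
    rw [Subfield.closure_le]
    intro z hz
    rcases hz with (hz | hz) | hz
    · exact Subfield.subset_closure (Or.inl (pPow_subset_pPowers hz))
    · refine SetLike.le_def.mp ?_ (hCc hz)
      rw [Subfield.closure_le]
      intro w hw
      rcases hw with hw | hw
      · exact Subfield.subset_closure (Or.inl hw)
      · refine Subfield.subset_closure (Or.inr ⟨Or.inl hw, fun hwx => ?_⟩)
        rw [Set.mem_singleton_iff] at hwx
        exact hAwnotc x hx (hwx ▸ hw)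
    · exact Subfield.subset_closure (Or.inr ⟨Or.inr hz.1, hz.2⟩)
  -- (ii-a)
  have hpb1 : PBasisOfSet p (D1 : Set F) (C : Set F) Aw := by
    refine ⟨hAD1, fun x hx => hindep D1 x hx, ?_⟩
    refine SetLike.coe_subset_coe.mpr ?_
    rw [hD1, Subfield.closure_le]
    intro z hz
    rcases hz with hz | hz
    · exact Subfield.subset_closure (Or.inl (Or.inr hz))
    · exact Subfield.subset_closure (Or.inr hz)
  -- (ii-b)
  have hpb2 : PBasisOfSet p (D2 : Set F) (C : Set F) Aw := by
    refine ⟨hAD2, fun x hx => hindep D2 x hx, ?_⟩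
    refine SetLike.coe_subset_coe.mpr ?_
    rw [hD2, Subfield.closure_le]
    intro z hz
    rcases hz with hz | (hz | hz)
    · exact Subfield.subset_closure (Or.inl (Or.inr hz))
    · exact Subfield.subset_closure (Or.inr hz)
    · rw [hBw, Set.mem_iUnion] at hz
      obtain ⟨n, hn⟩ := hz
      apply lambda_sum_mem hpp (hlamex n z hn)
      · intro w hw
        rcases hw with hw | hw
        · exact Subfield.subset_closure (Or.inl (Or.inr (hcC hw)))
        · exact Subfield.subset_closure
            (Or.inr (Set.mem_iUnion.mpr ⟨n + 1, hw⟩))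
      · intro y hy
        have hyB : y ∈ B (n + 1) := seq_lambdaVals_in_B hpp hdata hsep hc n hn y hy
        exact Subfield.subset_closure (Or.inl (Or.inl ⟨y, hBD2 (n + 1) hyB, rfl⟩))
  -- (iii)
  have hiii : SeparatedExt p (D1 : Set F) (D2 : Set F) := by
    constructor
    · exact sepext_mono (Set.subset_univ _) hsepD1
    · apply le_antisymm
      · intro z hz
        change z ∈ D2 at hz
        rw [hD2] at hz
        refine SetLike.le_def.mp ?_ hz
        rw [Subfield.closure_le]
        intro w hw
        rcases hw with hw | (hw | hw)
        · exact Subfield.subset_closure (Or.inr (hCD1 hw))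
        · exact Subfield.subset_closure (Or.inr (hAD1 hw))
        · rw [hBw, Set.mem_iUnion] at hw
          obtain ⟨n, hn⟩ := hw
          apply lambda_sum_mem hpp (hlamex n w hn)
          · intro u hu
            exact Subfield.subset_closure (Or.inr (hWD1 (hSW n hu)))
          · intro y hy
            have hyB : y ∈ B (n + 1) := seq_lambdaVals_in_B hpp hdata hsep hc n hn y hy
            exact Subfield.subset_closure (Or.inl ⟨y, hBD2 (n + 1) hyB, rfl⟩)
      · intro z hz
        have : Subfield.closure (pPow p (D2 : Set F) ∪ (D1 : Set F)) ≤ D2 := by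
          rw [Subfield.closure_le]
          intro w hw
          rcases hw with hw | hw
          · exact pPow_self D2 hw
          · exact hD1D2 hw
        exact this hz
  -- (i)
  have hi : ∀ D : Subfield F, IsLambdaClosure p ((C : Set F) ∪ a) D → D = D2 := by
    intro D hD
    obtain ⟨hCaD, hDsep, hmin⟩ := hD
    have hCD : (C : Set F) ⊆ ↑D := fun z hz => hCaD (Or.inl hz)
    have haD : a ⊆ ↑D := fun z hz => hCaD (Or.inr hz)
    have hABD : ∀ n, A n ⊆ ↑D ∧ B n ⊆ ↑D := by
      intro n
      induction n with
      | zero =>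
        constructor
        · rw [hdata.initA]; exact Set.empty_subset _
        · rw [hdata.initB]; exact haD
      | succ n ih =>
        obtain ⟨s, hsB, hchar, hA, hB⟩ := seq_step hdata n
        have hAn1 : A (n + 1) ⊆ ↑D := by
          rw [hA]
          intro z hz
          rcases hz with hz | hz
          · exact ih.1 hz
          · exact ih.2 (hsB hz)
        constructor
        · exact hAn1
        · rw [hB]
          intro z hz
          rcases hz with hz | hz
          · exact ih.2 hz
          · obtain ⟨b, ⟨hbB, hbSp⟩, hzv⟩ := hz
            have hSD : c ∪ A (n + 1) ⊆ (D : Set F) := by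
              intro w hw
              rcases hw with hw | hw
              · exact hCD (hcC hw)
              · exact hAn1 hw
            exact lambda_vals_mem_of_sep hpp D hDsep (c ∪ A (n + 1)) hSD
              (monomIndep_mono hpp.ne_zero ⊤ (hSW n) hWmono) (ih.2 hbB)
              (lambda_exists hpp _ hbSp) z hzv
    apply le_antisymm
    · apply hmin D2
      · intro z hz
        rcases hz with hz | hz
        · exact hCD2 hz
        · refine Subfield.subset_closure (Or.inr (Or.inr (Set.mem_iUnion.mpr ⟨0, ?_⟩)))
          rw [hdata.initB]
          exact hz
      · exact hsepD2
    · rw [hD2, Subfield.closure_le]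
      intro z hz
      rcases hz with hz | (hz | hz)
      · exact hCD hz
      · rw [hAw, Set.mem_iUnion] at hz
        obtain ⟨n, hn⟩ := hz
        exact (hABD n).1 hn
      · rw [hBw, Set.mem_iUnion] at hz
        obtain ⟨n, hn⟩ := hz
        exact (hABD n).2 hn
  exact ⟨hi, hpb1, hpb2, hiii, hsepD1, hsepD2⟩

end Assembly

section One

theorem pPowers_one : pPowers 1 F = Set.univ :=
  Set.eq_univ_of_forall fun x => ⟨x, pow_one x⟩

theorem closure_top_of_pPowers_one {s : Set F} (h : pPowers 1 F ⊆ s) :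
    Subfield.closure s = ⊤ := by
  rw [eq_top_iff]
  intro x _
  exact Subfield.subset_closure (h (by rw [pPowers_one]; trivial))

theorem pSpan_one (S T : Set F) : pSpan 1 S T = ⊤ :=
  closure_top_of_pPowers_one (fun z hz => Or.inl (Or.inl hz))

theorem sepext_one (C E : Set F) : SepExt 1 C E := by
  intro n x hx hind d hd hsum i
  apply hind d hd _ i
  rw [← hsum]
  apply Finset.sum_congr rfl
  intro j _
  rw [pow_one]

theorem lam_one_exists (S : Set F) (b : F) : ∃ l, IsLambdaFam 1 S b l := by
  refine ⟨Finsupp.single 0 b, ?_, ?_⟩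
  · intro I hI t
    have := Finsupp.support_single_subset hI
    rw [Finset.mem_singleton] at this
    subst this
    simp
  · rw [Finsupp.sum_single_index]
    · rw [Finsupp.prod_zero_index, pow_one, one_mul]
    · rw [pow_one, mul_zero]

theorem lambdaVals_one (S : Set F) (b : F) : lambdaVals 1 S b = {b} := by
  have h := lam_one_exists S b
  obtain ⟨hent, heq⟩ := h.choose_spec
  have hval : h.choose 0 = b := by
    have hsub : h.choose.support ⊆ {0} := by
      intro J hJ
      rw [Finset.mem_singleton]
      ext t
      have := hent J hJ t
      simp only [Finsupp.coe_zero, Pi.zero_apply]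
      omega
    by_cases h0 : (0 : ↥S →₀ ℕ) ∈ h.choose.support
    · have hsupp : h.choose.support = {0} :=
        le_antisymm hsub (Finset.singleton_subset_iff.mpr h0)
      conv_rhs => rw [heq]
      rw [Finsupp.sum, hsupp, Finset.sum_singleton, Finsupp.prod_zero_index,
        pow_one, one_mul]
    · have hz : h.choose 0 = 0 := Finsupp.notMem_support_iff.mp h0
      have hsupp : h.choose.support = ∅ := by
        rcases Finset.subset_singleton_iff.mp hsub with he | he
        · exact he
        · exact absurd (he ▸ Finset.mem_singleton_self _) h0
      rw [hz]
      conv_rhs => rw [heq]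
      rw [Finsupp.sum, hsupp, Finset.sum_empty]
  ext y
  constructor
  · rintro ⟨I, hIlt, rfl⟩
    have hI0 : I = 0 := by
      ext t
      have := hIlt t
      simp only [Finsupp.coe_zero, Pi.zero_apply]
      omega
    rw [Set.mem_singleton_iff, hI0, lambdaFam_eq h, hval]
  · intro hy
    rw [Set.mem_singleton_iff] at hy
    subst hy
    exact ⟨0, fun t => by simp, by rw [lambdaFam_eq h, hval]⟩

theorem lambdaSet_one (S Y : Set F) : lambdaSet 1 S Y = Y := by
  ext y
  constructor
  · rintro ⟨b, ⟨hb, _⟩, hy⟩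
    rw [lambdaVals_one, Set.mem_singleton_iff] at hy
    subst hy
    exact hb
  · intro hy
    exact ⟨y, ⟨hy, by rw [pSpan_one]; trivial⟩, by rw [lambdaVals_one]; rfl⟩

variable {C : Subfield F} {c a : Set F} {A B : ℕ → Set F} {r : ℕ → F → F → Prop}
variable (hdata : IsSplitSeq 1 (C : Set F) c a A B r)
include hdata

theorem seq_A_empty_one : ∀ n, A n = ∅ := by
  intro n
  induction n with
  | zero => exact hdata.initA
  | succ n ih =>
    obtain ⟨s, hsB, hchar, hA, _⟩ := seq_step hdata n
    have hs : s = ∅ := by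
      rw [Set.eq_empty_iff_forall_notMem]
      intro x hx
      exact (hchar x (hsB hx)).mp hx (by rw [pSpan_one]; trivial)
    rw [hA, hs, ih, Set.union_empty]

theorem seq_B_const_one : ∀ n, B n = a := by
  intro n
  induction n with
  | zero => exact hdata.initB
  | succ n ih =>
    obtain ⟨s, hsB, hchar, hA, hB⟩ := seq_step hdata n
    rw [hB, lambdaSet_one, Set.union_self, ih]

theorem statement11_one :
    (∀ D : Subfield F, IsLambdaClosure 1 ((C : Set F) ∪ a) D →
      D = Subfield.closure ((C : Set F) ∪ ((⋃ n, A n) ∪ ⋃ n, B n))) ∧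
    PBasisOfSet 1 (Subfield.closure ((C : Set F) ∪ ⋃ n, A n) : Set F)
      (C : Set F) (⋃ n, A n) ∧
    PBasisOfSet 1 (Subfield.closure ((C : Set F) ∪ ((⋃ n, A n) ∪ ⋃ n, B n)) : Set F)
      (C : Set F) (⋃ n, A n) ∧
    SeparatedExt 1 (Subfield.closure ((C : Set F) ∪ ⋃ n, A n) : Set F)
      (Subfield.closure ((C : Set F) ∪ ((⋃ n, A n) ∪ ⋃ n, B n)) : Set F) ∧
    SepExt 1 (Subfield.closure ((C : Set F) ∪ ⋃ n, A n) : Set F) (Set.univ : Set F) ∧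
    SepExt 1 (Subfield.closure ((C : Set F) ∪ ((⋃ n, A n) ∪ ⋃ n, B n)) : Set F)
      (Set.univ : Set F) := by
  have hAU : (⋃ n, A n) = (∅ : Set F) := by
    simp [seq_A_empty_one hdata]
  have hBU : (⋃ n, B n) = a := by
    ext x
    simp [seq_B_const_one hdata]
  rw [hAU, hBU, Set.empty_union, Set.union_empty]
  set D1 : Subfield F := Subfield.closure ((C : Set F)) with hD1
  set D2 : Subfield F := Subfield.closure ((C : Set F) ∪ a) with hD2
  have hD1D2 : D1 ≤ D2 := Subfield.closure_mono Set.subset_union_left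
  refine ⟨?_, ?_, ?_, ?_, sepext_one _ _, sepext_one _ _⟩
  · intro D hD
    obtain ⟨hCaD, _, hmin⟩ := hD
    apply le_antisymm
    · exact hmin D2 Subfield.subset_closure (sepext_one _ _)
    · rw [hD2, Subfield.closure_le]
      exact hCaD
  · refine ⟨Set.empty_subset _, fun x hx => absurd hx (Set.notMem_empty x), ?_⟩
    intro z hz
    exact Subfield.subset_closure (Or.inl (Or.inl ⟨z, hz, pow_one z⟩))
  · refine ⟨Set.empty_subset _, fun x hx => absurd hx (Set.notMem_empty x), ?_⟩
    intro z hz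
    exact Subfield.subset_closure (Or.inl (Or.inl ⟨z, hz, pow_one z⟩))
  · constructor
    · exact sepext_one _ _
    · apply le_antisymm
      · intro z hz
        exact Subfield.subset_closure (Or.inl ⟨z, hz, pow_one z⟩)
      · refine SetLike.coe_subset_coe.mpr ?_
        rw [Subfield.closure_le]
        intro z hz
        rcases hz with hz | hz
        · exact pPow_self D2 hz
        · exact hD1D2 hz

end One

end SepPaper

namespace SepPaper

/-- Proposition `chain_3` on the local lambda closure.
Let `F/C` be separable of characteristic exponent `p`, `c` a well-ordered `p`-basis of
`C`, and `a` a well-ordered subset of `F`.  Let `(A n, B n)_n` (with well-orders `r n`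
on `B n`) be the sequence `(ℓ^n_{F/c}(a))_n` of iterates of the splitting-pairs map
starting from `(∅, a)`, so that `λ^I_{F/c}a = ⋃_n A n`, `λ^S_{F/c}a = ⋃_n B n` and
`λ_{F/c}a = λ^I_{F/c}a ∪ λ^S_{F/c}a`.  Then:
(i) `Λ_F C(a) = C(λ_{F/c}a)`;
(ii) `λ^I_{F/c}a` is a `p`-basis over `C` of both `C(λ^I_{F/c}a)` and `C(λ_{F/c}a)`;
(iii) `C(λ_{F/c}a)/C(λ^I_{F/c}a)` is separated;
(iv) both `F/C(λ^I_{F/c}a)` and `F/C(λ_{F/c}a)` are separable. -/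
theorem statement11 {F : Type*} [Field F] (p : ℕ) (hp : p = ringExpChar F)
    (C : Subfield F) (hsep : SepExt p (C : Set F) (Set.univ : Set F))
    (c : Set F) (hc : PBasisOfSet p (C : Set F) ∅ c)
    (a : Set F) (A B : ℕ → Set F) (r : ℕ → F → F → Prop)
    (hdata : IsSplitSeq p (C : Set F) c a A B r) :
    (∀ D : Subfield F, IsLambdaClosure p ((C : Set F) ∪ a) D →
      D = Subfield.closure ((C : Set F) ∪ ((⋃ n, A n) ∪ ⋃ n, B n))) ∧
    PBasisOfSet p (Subfield.closure ((C : Set F) ∪ ⋃ n, A n) : Set F)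
      (C : Set F) (⋃ n, A n) ∧
    PBasisOfSet p (Subfield.closure ((C : Set F) ∪ ((⋃ n, A n) ∪ ⋃ n, B n)) : Set F)
      (C : Set F) (⋃ n, A n) ∧
    SeparatedExt p (Subfield.closure ((C : Set F) ∪ ⋃ n, A n) : Set F)
      (Subfield.closure ((C : Set F) ∪ ((⋃ n, A n) ∪ ⋃ n, B n)) : Set F) ∧
    SepExt p (Subfield.closure ((C : Set F) ∪ ⋃ n, A n) : Set F) (Set.univ : Set F) ∧
    SepExt p (Subfield.closure ((C : Set F) ∪ ((⋃ n, A n) ∪ ⋃ n, B n)) : Set F)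
      (Set.univ : Set F) := by
  have hexp : ExpChar F p := by rw [hp]; exact ringExpChar.expChar F
  cases hexp with
  | zero => exact statement11_one hdata
  | prime hprime =>
    exact statement11_prime hprime hdata hsep hc

end SepPaper
end

section
/- Let L be a topological field whose topology is not the discrete topology. Then the subfield of L generated by any nonempty open subset U of L is the whole of L; consequently, for every proper subfield K ⊊ L and every nonempty open U ⊆ L, the set U ∖ K is nonempty. -/
/-- Lemma `wiggling`.
Let `L` be a topological field (addition, negation, multiplication continuous, and
inversion continuous away from `0`) whose topology is not discrete.  Then the subfield
of `L` generated by any nonempty open subset `U` is all of `L`; consequently, for every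
proper subfield `K ⊊ L` and every nonempty open `U ⊆ L`, the set `U \ K` is nonempty. -/
theorem statement15 {L : Type*} [Field L] [TopologicalSpace L] [IsTopologicalRing L]
    [ContinuousInv₀ L] (hnd : ¬ DiscreteTopology L)
    (U : Set L) (hU : IsOpen U) (hne : U.Nonempty) :
    Subfield.closure U = ⊤ ∧
    ∀ K : Subfield L, K ≠ ⊤ → (U \ (K : Set L)).Nonempty := by
  obtain ⟨u, hu⟩ := hne
  set F := Subfield.closure U with hF
  have hUF : U ⊆ (F : Set L) := Subfield.subset_closure
  -- F is open, since it is an additive subgroup which is a neighborhood of u.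
  have hFopen : IsOpen (F : Set L) := by
    have : (F.toSubring.toAddSubgroup : Set L) ∈ nhds u :=
      Filter.mem_of_superset (hU.mem_nhds hu) hUF
    exact AddSubgroup.isOpen_of_mem_nhds F.toSubring.toAddSubgroup this
  -- In a nondiscrete topology, every neighborhood of 0 contains a nonzero element.
  have hkey : ∀ W ∈ nhds (0 : L), ∃ t ∈ W, t ≠ 0 := by
    intro W hW
    by_contra h
    push_neg at h
    apply hnd
    rw [discreteTopology_iff_isOpen_singleton_zero]
    have hsub : W ⊆ {0} := fun t ht => h t ht
    have h0 : ({0} : Set L) ∈ nhds (0 : L) := Filter.mem_of_superset hW hsub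
    obtain ⟨O, hO1, hO2, hO3⟩ := mem_nhds_iff.1 h0
    have : O = {0} := Set.Subset.antisymm hO1 (Set.singleton_subset_iff.2 hO3)
    exact this ▸ hO2
  have htop : F = ⊤ := by
    rw [eq_top_iff]
    intro x _
    rcases eq_or_ne x 0 with rfl | hx
    · exact F.zero_mem
    · have hc : ContinuousAt (fun t => x * t) 0 := (continuous_mul_left x).continuousAt
      have hF0 : (F : Set L) ∈ nhds (0 : L) := hFopen.mem_nhds F.zero_mem
      have hW : (fun t => x * t) ⁻¹' (F : Set L) ∈ nhds (0 : L) := by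
        apply hc.preimage_mem_nhds
        simpa using hF0
      obtain ⟨t, htW, ht0⟩ := hkey _ (Filter.inter_mem hW hF0)
      have h1 : x * t ∈ F := htW.1
      have h2 : t ∈ F := htW.2
      have : (x * t) * t⁻¹ ∈ F := F.mul_mem h1 (F.inv_mem h2)
      rwa [mul_assoc, mul_inv_cancel₀ ht0, mul_one] at this
  refine ⟨htop, fun K hK => ?_⟩
  by_contra h
  rw [Set.not_nonempty_iff_eq_empty, Set.diff_eq_empty] at h
  exact hK (top_le_iff.1 (htop ▸ Subfield.closure_le.2 h))
end

section
/- Let K₁ and K₂ be two separable field extensions of a field K of characteristic exponent p, and suppose that the extension K₁/K is separated, i.e. K₁ = K₁^(p)·K. Then every field embedding ι: K₁ → K₂ that fixes K pointwise is separable, i.e. the extension K₂/ι(K₁) is separable. -/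
open scoped Classical

namespace SepPaper

section Aux

variable {F : Type*} [Field F]

/-- The `C`-linear span of all `p`-th powers of `F`. -/
def powSpan (p : ℕ) (C : Subfield F) : Submodule ↥C F :=
  Submodule.span ↥C (Set.range fun x : F => x ^ p)

lemma pow_mem_powSpan (p : ℕ) (C : Subfield F) (t : F) : t ^ p ∈ powSpan p C :=
  Submodule.subset_span ⟨t, rfl⟩

lemma one_mem_powSpan (p : ℕ) (C : Subfield F) : (1 : F) ∈ powSpan p C := by
  simpa using pow_mem_powSpan p C 1

lemma mul_mem_powSpan {p : ℕ} {C : Subfield F} {x y : F}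
    (hx : x ∈ powSpan p C) (hy : y ∈ powSpan p C) : x * y ∈ powSpan p C := by
  have h : powSpan p C * powSpan p C ≤ powSpan p C := by
    rw [powSpan, Submodule.span_mul_span]
    refine Submodule.span_le.2 ?_
    rintro _ ⟨_, ⟨a, rfl⟩, _, ⟨b, rfl⟩, rfl⟩
    exact Submodule.subset_span ⟨a * b, mul_pow a b p⟩
  exact h (Submodule.mul_mem_mul hx hy)

lemma mem_powSpan_of_mem {p : ℕ} {C : Subfield F} {c : F} (hc : c ∈ C) :
    c ∈ powSpan p C := by
  have := Submodule.smul_mem (powSpan p C) (⟨c, hc⟩ : ↥C) (one_mem_powSpan p C)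
  rwa [show (⟨c, hc⟩ : ↥C) • (1 : F) = c from mul_one c] at this

/-- `powSpan` as a subring. -/
def powSpanSubring (p : ℕ) (C : Subfield F) : Subring F where
  carrier := powSpan p C
  zero_mem' := (powSpan p C).zero_mem
  one_mem' := one_mem_powSpan p C
  add_mem' := fun hx hy => (powSpan p C).add_mem hx hy
  neg_mem' := fun hx => (powSpan p C).neg_mem hx
  mul_mem' := fun hx hy => mul_mem_powSpan hx hy

lemma subring_closure_le_powSpan (p : ℕ) (C : Subfield F) :
    Subring.closure (pPow p (Set.univ : Set F) ∪ ↑C) ≤ powSpanSubring p C := by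
  refine Subring.closure_le.2 ?_
  rintro x (⟨t, -, rfl⟩ | hx)
  · exact pow_mem_powSpan p C t
  · exact mem_powSpan_of_mem hx

lemma field_rep {p : ℕ} {C : Subfield F}
    (hsepd : Subfield.closure (pPow p (Set.univ : Set F) ∪ ↑C) = ⊤) (e : F) :
    ∃ g h : F, g ∈ powSpan p C ∧ h ∈ powSpan p C ∧ h ≠ 0 ∧ e * h = g := by
  have he : e ∈ Subfield.closure (pPow p (Set.univ : Set F) ∪ ↑C) := by
    rw [hsepd]; trivial
  obtain ⟨y, hy, z, hz, hyz⟩ := Subfield.mem_closure_iff.1 he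
  by_cases hz0 : z = 0
  · refine ⟨0, 1, (powSpan p C).zero_mem, one_mem_powSpan p C, one_ne_zero, ?_⟩
    subst hz0
    rw [mul_one, ← hyz, div_zero]
  · refine ⟨y, z, subring_closure_le_powSpan p C hy, subring_closure_le_powSpan p C hz, hz0, ?_⟩
    rw [← hyz, div_mul_cancel₀ _ hz0]

lemma rep_lemma (p : ℕ) [ExpChar F p] (C : Subfield F) {ιB : Type*} (B : Module.Basis ιB ↥C F)
    {x : F} (hx : x ∈ powSpan p C) :
    ∃ l : ιB →₀ ↥C, x = l.sum fun j c => (c : F) * B j ^ p := by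
  have hle : powSpan p C ≤ Submodule.span ↥C (Set.range fun j => B j ^ p) := by
    refine Submodule.span_le.2 ?_
    rintro _ ⟨t, rfl⟩
    have ht : t = ∑ j ∈ (B.repr t).support, ((B.repr t j : F) * B j) := by
      conv_lhs => rw [← B.linearCombination_repr t]
      rw [Finsupp.linearCombination_apply]
      rfl
    have ht2 : t ^ p = ∑ j ∈ (B.repr t).support, ((B.repr t j : F) ^ p * B j ^ p) := by
      conv_lhs => rw [ht]
      rw [show (∑ j ∈ (B.repr t).support, ((B.repr t j : F) * B j)) ^ p
          = frobenius F p (∑ j ∈ (B.repr t).support, ((B.repr t j : F) * B j)) from rfl,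
        map_sum]
      exact Finset.sum_congr rfl fun j _ => by rw [map_mul]; rfl
    show t ^ p ∈ _
    rw [ht2]
    refine Submodule.sum_mem _ fun j _ => ?_
    have := Submodule.smul_mem (Submodule.span ↥C (Set.range fun j => B j ^ p))
      (⟨(B.repr t j : F) ^ p, pow_mem (B.repr t j).2 p⟩ : ↥C)
      (Submodule.subset_span ⟨j, rfl⟩)
    exact this
  obtain ⟨l, hl⟩ := Finsupp.mem_span_range_iff_exists_finsupp.1 (hle hx)
  exact ⟨l, by rw [← hl]; rfl⟩

lemma sepExt_fintype {p : ℕ} {C E : Set F} (hs : SepExt p C E)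
    {κ : Type*} [Fintype κ] (w : κ → F) (hw : ∀ q, w q ∈ E)
    (hind : ∀ dd : κ → F, (∀ q, dd q ∈ C) → ∑ q, dd q * w q = 0 → ∀ q, dd q = 0)
    (dd : κ → F) (hdd : ∀ q, dd q ∈ C) (h0 : ∑ q, dd q * w q ^ p = 0) : ∀ q, dd q = 0 := by
  classical
  let e := (Fintype.equivFin κ).symm
  have hind' : ∀ d' : Fin (Fintype.card κ) → F, (∀ i, d' i ∈ C) →
      (∑ i, d' i * (w ∘ e) i) = 0 → ∀ i, d' i = 0 := by
    intro d' hd' hsum i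
    have h2 : ∑ q, d' (e.symm q) * w q = 0 := by
      rw [← Equiv.sum_comp e (fun q => d' (e.symm q) * w q)]
      simpa using hsum
    have := hind (fun q => d' (e.symm q)) (fun q => hd' _) h2 (e i)
    simpa using this
  have hsum' : (∑ i, (dd ∘ e) i * (w ∘ e) i ^ p) = 0 :=
    (Equiv.sum_comp e (fun q => dd q * w q ^ p)).trans h0
  have key := hs (Fintype.card κ) (w ∘ e) (fun i => hw (e i)) hind'
    (dd ∘ e) (fun i => hdd (e i)) hsum'
  intro q
  have := key (e.symm q)
  simpa using this

end Aux


/-- Lemma `automatic_separability`.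
Let `K₁` and `K₂` be two separable field extensions of a field `K` of characteristic
exponent `p` (given by embeddings `f₁ : K → K₁` and `f₂ : K → K₂`), and suppose that
`K₁/K` is separated, i.e. `K₁ = K₁^(p)·K`.  Then every field embedding `ι : K₁ → K₂`
fixing `K` pointwise (i.e. with `ι ∘ f₁ = f₂`) is separable: the extension `K₂/ι(K₁)`
is separable. -/
theorem statement16 {K K₁ K₂ : Type*} [Field K] [Field K₁] [Field K₂]
    (p : ℕ) (hp : p = ringExpChar K)
    (f₁ : K →+* K₁) (f₂ : K →+* K₂)
    (hsep₁ : SepExt p (Set.range f₁) (Set.univ : Set K₁))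
    (hsep₂ : SepExt p (Set.range f₂) (Set.univ : Set K₂))
    (hsepd : Subfield.closure (pPow p (Set.univ : Set K₁) ∪ Set.range f₁) = ⊤)
    (ι : K₁ →+* K₂) (hfix : ι.comp f₁ = f₂) :
    SepExt p (Set.range ι) (Set.univ : Set K₂) := by
  classical
  intro n x hx hind d hd hsum
  haveI : ExpChar K p := by rw [hp]; infer_instance
  haveI : ExpChar K₁ p := expChar_of_injective_ringHom f₁.injective p
  haveI : ExpChar K₂ p := expChar_of_injective_ringHom f₂.injective p
  set C₁ : Subfield K₁ := f₁.fieldRange with hC₁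
  have hC₁s : (C₁ : Set K₁) = Set.range f₁ := f₁.coe_fieldRange
  have hsepd' : Subfield.closure (pPow p (Set.univ : Set K₁) ∪ ↑C₁) = ⊤ := by
    rw [hC₁s]; exact hsepd
  have hfix' : ∀ a : K, ι (f₁ a) = f₂ a := fun a => by rw [← hfix]; rfl
  -- lift the coefficients to K₁
  have hchoice : ∀ i, ∃ e : K₁, ι e = d i := fun i => hd i
  choose e he using hchoice
  -- write each `e i` as a fraction of elements of `powSpan`
  have hfr : ∀ i, ∃ g h : K₁, g ∈ powSpan p C₁ ∧ h ∈ powSpan p C₁ ∧ h ≠ 0 ∧ e i * h = g :=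
    fun i => field_rep hsepd' (e i)
  choose g hden hg hhd hhne heg using hfr
  set h : K₁ := ∏ i, hden i with hh
  have hne : h ≠ 0 := Finset.prod_ne_zero_iff.2 fun i _ => hhne i
  have hG : ∀ i, e i * h ∈ powSpan p C₁ := by
    intro i
    have hGi : e i * h = g i * ∏ i' ∈ Finset.univ.erase i, hden i' := by
      rw [hh, ← Finset.mul_prod_erase Finset.univ hden (Finset.mem_univ i), ← mul_assoc, heg i]
    rw [hGi]
    exact mul_mem_powSpan (hg i)
      (Finset.prod_induction _ (· ∈ powSpan p C₁) (fun a b ha hb => mul_mem_powSpan ha hb)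
        (one_mem_powSpan p C₁) (fun i' _ => hhd i'))
  -- choose a linear basis of K₁ over K and represent the numerators
  let B := Module.Basis.ofVectorSpace ↥C₁ K₁
  have hrep : ∀ i, ∃ l : _ →₀ ↥C₁, e i * h = l.sum fun j c => (c : K₁) * B j ^ p :=
    fun i => rep_lemma p C₁ B (hG i)
  choose l hl using hrep
  set s := Finset.univ.biUnion (fun i : Fin n => (l i).support) with hs
  have hsub : ∀ i, (l i).support ⊆ s := fun i =>
    Finset.subset_biUnion_of_mem (fun i : Fin n => (l i).support) (Finset.mem_univ i)
  have hGi : ∀ i, e i * h = ∑ j ∈ s, ((l i j : K₁) * B j ^ p) := by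
    intro i
    rw [hl i]
    exact Finsupp.sum_of_support_subset _ (hsub i) _ (fun j _ => by simp)
  -- the products ι(B j) * x i are linearly independent over f₂(K)
  have hwind : ∀ dd : (Fin n × {j // j ∈ s}) → K₂, (∀ q, dd q ∈ Set.range f₂) →
      ∑ q, dd q * (ι (B q.2.1) * x q.1) = 0 → ∀ q, dd q = 0 := by
    intro dd hdd hz q
    choose c hc using hdd
    set Y : Fin n → K₁ := fun i => ∑ jq : {j // j ∈ s}, f₁ (c (i, jq)) * B jq.1 with hY
    have hYι : ∀ i, ι (Y i) = ∑ jq : {j // j ∈ s}, f₂ (c (i, jq)) * ι (B jq.1) := by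
      intro i
      rw [hY, map_sum]
      exact Finset.sum_congr rfl fun jq _ => by rw [map_mul, hfix']
    have hz' : ∑ i, ι (Y i) * x i = 0 := by
      rw [← hz, Fintype.sum_prod_type]
      refine Finset.sum_congr rfl fun i _ => ?_
      rw [hYι i, Finset.sum_mul]
      refine Finset.sum_congr rfl fun jq _ => ?_
      rw [← hc (i, jq)]
      ring
    have hY0 : ∀ i, Y i = 0 := by
      intro i
      have := hind (fun i => ι (Y i)) (fun i => ⟨Y i, rfl⟩) hz' i
      exact ι.injective (by rw [this, map_zero])
    -- use linear independence of the basis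
    obtain ⟨i, jq⟩ := q
    set gc : _ → ↥C₁ := fun j => if hj : j ∈ s then ⟨f₁ (c (i, ⟨j, hj⟩)), ⟨_, rfl⟩⟩ else 0
      with hgc
    have hgsum : ∑ j ∈ s, gc j • B j = 0 := by
      rw [← hY0 i, hY, Finset.univ_eq_attach,
        ← Finset.sum_attach s (fun j => gc j • B j)]
      refine Finset.sum_congr rfl fun j _ => ?_
      have : gc j.1 = ⟨f₁ (c (i, ⟨j.1, j.2⟩)), ⟨_, rfl⟩⟩ := by rw [hgc]; exact dif_pos j.2
      rw [this]
      show (f₁ (c (i, ⟨j.1, j.2⟩)) : K₁) * B j.1 = f₁ (c (i, j)) * B j.1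
      rw [Subtype.coe_eta]
    have hgc0 := linearIndependent_iff'.1 B.linearIndependent s gc hgsum jq.1 jq.2
    have hval : f₁ (c (i, jq)) = 0 := by
      have : gc jq.1 = ⟨f₁ (c (i, ⟨jq.1, jq.2⟩)), ⟨_, rfl⟩⟩ := by rw [hgc]; exact dif_pos jq.2
      rw [this] at hgc0
      have := congrArg (Subtype.val) hgc0
      simpa [Subtype.coe_eta] using this
    rw [← hc (i, jq), ← hfix', hval, map_zero]
  -- the relation among the p-th powers
  have hD : ∀ q : Fin n × {j // j ∈ s}, ι ((l q.1 q.2.1 : K₁)) ∈ Set.range f₂ := by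
    intro q
    obtain ⟨a, ha⟩ := RingHom.mem_fieldRange.1 (l q.1 q.2.1).2
    exact ⟨a, by rw [← hfix' a, ha]⟩
  have hd2 : ∑ q : Fin n × {j // j ∈ s}, ι (l q.1 q.2.1 : K₁) * (ι (B q.2.1) * x q.1) ^ p
      = 0 := by
    rw [Fintype.sum_prod_type]
    have h1 : ∀ i : Fin n, (∑ jq : {j // j ∈ s},
        ι (l i jq.1 : K₁) * (ι (B jq.1) * x i) ^ p) = ι (e i * h) * x i ^ p := by
      intro i
      rw [hGi i, map_sum, Finset.sum_mul, Finset.univ_eq_attach,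
        ← Finset.sum_attach s (fun j => ι ((l i j : K₁) * B j ^ p) * x i ^ p)]
      refine Finset.sum_congr rfl fun jq _ => ?_
      rw [map_mul, map_pow, mul_pow]
      ring
    rw [Finset.sum_congr rfl (fun i _ => h1 i)]
    have h2 : ∀ i : Fin n, ι (e i * h) * x i ^ p = ι h * (d i * x i ^ p) := by
      intro i
      rw [map_mul, he i]
      ring
    rw [Finset.sum_congr rfl (fun i _ => h2 i), ← Finset.mul_sum, hsum, mul_zero]
  have hz := sepExt_fintype hsep₂ (fun q : Fin n × {j // j ∈ s} => ι (B q.2.1) * x q.1)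
    (fun _ => trivial) hwind (fun q => ι (l q.1 q.2.1 : K₁)) hD hd2
  have he0 : ∀ i, e i = 0 := by
    intro i
    have h1 : e i * h = 0 := by
      rw [hGi i]
      refine Finset.sum_eq_zero fun j hj => ?_
      have hl0 : (l i j : K₁) = 0 := ι.injective (by simpa using hz (i, ⟨j, hj⟩))
      rw [hl0, zero_mul]
    exact (mul_eq_zero.1 h1).resolve_right hne
  intro i
  rw [← he i, he0 i, map_zero]


end SepPaper
end

section
/- Let F/C be a field extension and let a = (a_0,…,a_{n−1}) ∈ F^n. For each j < n choose polynomials g_j ∈ C[X_0,…,X_j] and h_j ∈ C[X_0,…,X_{j−1}] such that: if a_j is algebraic over C(a_0,…,a_{j−1}) then h_j(a_0,…,a_{j−1}) ≠ 0 and g_j(a_0,…,a_{j−1},X_j)/h_j(a_0,…,a_{j−1}) is the minimal polynomial of a_j over C(a_0,…,a_{j−1}), and if a_j is transcendental over C(a_0,…,a_{j−1}) then g_j = 0 and h_j = 1. Then: (i) for any finitely many polynomials f_0,…,f_{l−1} ∈ C[X_0,…,X_{n−1}] with f_i(a) = 0 for all i < l, there is a Zariski open set U ⊆ F^n with a ∈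 U such that every x ∈ U with g_0(x) = … = g_{n−1}(x) = 0 satisfies f_0(x) = … = f_{l−1}(x) = 0; (ii) there is a Zariski open set V ⊆ F^n with a ∈ V such that for every j ∈ {0,…,n}, a point x ∈ V lies in locus(a/C)(F) if and only if (x_0,…,x_{j−1}) ∈ locus((a_0,…,a_{j−1})/C)(F) and g_j(x) = … = g_{n−1}(x) = 0. In particular, taking j = 0, locus(a/C)(F) ∩ V = {x ∈ V : g_0(x) = … = g_{n−1}(x) = 0}. -/
namespace SepPaper

/-- The `F`-rational points of the locus of the tuple `a` over `C`:
the common zero set of all polynomials over `C` vanishing at `a`. -/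
def locusSet (C : Type*) {F : Type*} [CommRing C] [CommRing F] [Algebra C F]
    {ι : Type*} (a : ι → F) : Set (ι → F) :=
  {x | ∀ f : MvPolynomial ι C, MvPolynomial.aeval a f = 0 → MvPolynomial.aeval x f = 0}

/-- A Zariski open subset of affine space over `F`: the complement of the common zero
set of a family of polynomials over `F`. -/
def IsZariskiOpen {F : Type*} [CommRing F] {ι : Type*} (U : Set (ι → F)) : Prop :=
  ∃ T : Set (MvPolynomial ι F), U = {x | ∃ f ∈ T, MvPolynomial.eval x f ≠ 0}

end SepPaper

namespace SepPaper

open Polynomial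

section Aux
variable {C F : Type*} [Field C] [Field F] [Algebra C F] {n : ℕ}

/-- Split off the variable `j`. -/
noncomputable def Phi (C : Type*) [Field C] {n : ℕ} (j : Fin n) :
    MvPolynomial (Fin n) C →ₐ[C] Polynomial (MvPolynomial (Fin n) C) :=
  MvPolynomial.aeval fun i => if i = j then Polynomial.X else Polynomial.C (MvPolynomial.X i)

/-- Evaluate a polynomial over the multivariate ring at the point `(y, y j)`. -/
noncomputable def psi (y : Fin n → F) (j : Fin n) :
    Polynomial (MvPolynomial (Fin n) C) →+* F :=
  Polynomial.eval₂RingHom (MvPolynomial.aeval y : MvPolynomial (Fin n) C →ₐ[C] F).toRingHom (y j)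

lemma psi_phi (y : Fin n → F) (j : Fin n) (p : MvPolynomial (Fin n) C) :
    psi y j (Phi C j p) = MvPolynomial.aeval y p := by
  have : ((psi y j).comp (Phi C j).toRingHom : MvPolynomial (Fin n) C →+* F)
      = (MvPolynomial.aeval y : MvPolynomial (Fin n) C →ₐ[C] F).toRingHom := by
    apply MvPolynomial.ringHom_ext
    · intro c; simp [psi, Phi]
    · intro i
      by_cases hij : i = j <;> simp [psi, Phi, hij]
  exact RingHom.congr_fun this p

lemma psi_C (y : Fin n → F) (j : Fin n) (b : MvPolynomial (Fin n) C) :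
    psi y j (Polynomial.C b) = MvPolynomial.aeval y b := by simp [psi]

lemma psi_expand (y : Fin n → F) (j : Fin n) {Q : Polynomial (MvPolynomial (Fin n) C)}
    {m : ℕ} (hm : Q.natDegree < m) :
    psi y j Q = ∑ e ∈ Finset.range m, MvPolynomial.aeval y (Q.coeff e) * (y j) ^ e := by
  rw [psi, coe_eval₂RingHom]; exact Polynomial.eval₂_eq_sum_range' _ hm (y j)

lemma mapPhi (y : Fin n → F) (j : Fin n) (p : MvPolynomial (Fin n) C) :
    (Phi C j p).map (MvPolynomial.aeval y : MvPolynomial (Fin n) C →ₐ[C] F).toRingHom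
      = MvPolynomial.aeval
          (fun i => if i = j then (Polynomial.X : Polynomial F) else Polynomial.C (y i)) p := by
  have : ((Polynomial.mapAlgHom (MvPolynomial.aeval y : MvPolynomial (Fin n) C →ₐ[C] F)).comp
        (Phi C j) : MvPolynomial (Fin n) C →ₐ[C] Polynomial F)
      = MvPolynomial.aeval
          (fun i => if i = j then (Polynomial.X : Polynomial F) else Polynomial.C (y i)) := by
    apply MvPolynomial.algHom_ext
    intro i
    by_cases hij : i = j <;> simp [Phi, Polynomial.mapAlgHom, hij]
  exact AlgHom.congr_fun this p


/-- Lift a polynomial with variables `≤ j` to a one-variable polynomial whose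
coefficients are supported on variables `< j`. -/
lemma exists_lift (j : Fin n) (p : MvPolynomial (Fin n) C) (hp : ∀ i ∈ p.vars, i ≤ j) :
    ∃ q : Polynomial ↥(MvPolynomial.supported C {i : Fin n | i < j}),
      q.map (Subalgebra.val _).toRingHom = Phi C j p := by
  classical
  have hps : p ∈ MvPolynomial.supported C {i : Fin n | i ≤ j} :=
    (MvPolynomial.mem_supported).2 (fun i hi => hp i (by simpa using hi))
  rw [MvPolynomial.supported_eq_adjoin_X] at hps
  have hmem : Phi C j p ∈ (Algebra.adjoin C
      (MvPolynomial.X '' {i : Fin n | i ≤ j})).map (Phi C j) :=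
    Subalgebra.mem_map.2 ⟨p, hps, rfl⟩
  rw [AlgHom.map_adjoin] at hmem
  have hle : Algebra.adjoin C ((Phi C j) '' (MvPolynomial.X '' {i : Fin n | i ≤ j}))
      ≤ (Polynomial.mapAlgHom
          (MvPolynomial.supported C {i : Fin n | i < j}).val).range := by
    apply Algebra.adjoin_le
    rintro y ⟨-, ⟨i, hi, rfl⟩, rfl⟩
    by_cases hij : i = j
    · refine ⟨Polynomial.X, ?_⟩
      simp [Phi, hij, Polynomial.mapAlgHom]
    · have hilt : i < j := lt_of_le_of_ne hi hij
      refine ⟨Polynomial.C ⟨MvPolynomial.X i,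
        (MvPolynomial.X_mem_supported (R := C)).2 hilt⟩, ?_⟩
      simp [Phi, hij, Polynomial.mapAlgHom]
  obtain ⟨q, hq⟩ := hle hmem
  exact ⟨q, hq⟩

/-- The subfield generated by the first `j` coordinates of `a`. -/
noncomputable def Kf (C : Type*) [Field C] [Algebra C F] (a : Fin n → F) (j : Fin n) : IntermediateField C F :=
  IntermediateField.adjoin C {y | ∃ i : Fin n, i < j ∧ y = a i}

lemma aeval_mem_Kf (a : Fin n → F) (j : Fin n) {p : MvPolynomial (Fin n) C}
    (hp : p ∈ MvPolynomial.supported C {i : Fin n | i < j}) :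
    MvPolynomial.aeval a p ∈ Kf C a j := by
  rw [MvPolynomial.supported_eq_adjoin_X] at hp
  have hmem : MvPolynomial.aeval a p ∈ (Algebra.adjoin C
      (MvPolynomial.X '' {i : Fin n | i < j})).map (MvPolynomial.aeval a) :=
    Subalgebra.mem_map.2 ⟨p, hp, rfl⟩
  rw [AlgHom.map_adjoin] at hmem
  have h1 : ⇑(MvPolynomial.aeval (R := C) a) '' (MvPolynomial.X '' {i : Fin n | i < j})
      ⊆ {y | ∃ i : Fin n, i < j ∧ y = a i} := by
    rintro y ⟨-, ⟨i, hi, rfl⟩, rfl⟩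
    exact ⟨i, hi, by simp⟩
  have h2 : Algebra.adjoin C (⇑(MvPolynomial.aeval (R := C) a) '' (MvPolynomial.X ''
        {i : Fin n | i < j}))
      ≤ (Kf C a j).toSubalgebra :=
    le_trans (Algebra.adjoin_mono h1) (IntermediateField.algebra_adjoin_le_adjoin _ _)
  exact h2 hmem

/-- Evaluation at `a` from polys supported below `j` into the subfield `Kf C a j`. -/
noncomputable def nu (a : Fin n → F) (j : Fin n) :
    ↥(MvPolynomial.supported C {i : Fin n | i < j}) →+* ↥(Kf C a j) :=
  RingHom.codRestrict
    ((MvPolynomial.aeval a : MvPolynomial (Fin n) C →ₐ[C] F).toRingHom.comp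
      (Subalgebra.val _).toRingHom) _ (fun s => aeval_mem_Kf (C := C) a j s.2)

@[simp] lemma nu_apply (a : Fin n → F) (j : Fin n)
    (s : ↥(MvPolynomial.supported C {i : Fin n | i < j})) :
    ((nu a j s : ↥(Kf C a j)) : F) = MvPolynomial.aeval a (s : MvPolynomial (Fin n) C) := rfl

/-- `aeval (a j)` of a `ν`-mapped polynomial agrees with `psi a` of the `val`-mapped one. -/
lemma aeval_nu_map (a : Fin n → F) (j : Fin n)
    (q : Polynomial ↥(MvPolynomial.supported C {i : Fin n | i < j})) :
    Polynomial.aeval (a j) (q.map (nu a j))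
      = psi a j (q.map (Subalgebra.val _).toRingHom) := by
  rw [Polynomial.aeval_def, Polynomial.eval₂_map]
  rw [show (psi a j : Polynomial (MvPolynomial (Fin n) C) →+* F)
      = Polynomial.eval₂RingHom
          (MvPolynomial.aeval a : MvPolynomial (Fin n) C →ₐ[C] F).toRingHom (a j) from rfl,
    coe_eval₂RingHom, Polynomial.eval₂_map]
  congr 1


/-- Combined evaluation of an `S`-coefficient polynomial at the point `(y, y j)`. -/
noncomputable def homE (y : Fin n → F) (j : Fin n) :
    Polynomial ↥(MvPolynomial.supported C {i : Fin n | i < j}) →+* F :=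
  (psi y j).comp (Polynomial.mapRingHom (Subalgebra.val _).toRingHom)

lemma homE_expand (y : Fin n → F) (j : Fin n)
    {q : Polynomial ↥(MvPolynomial.supported C {i : Fin n | i < j})} {m : ℕ}
    (hm : q.natDegree < m) :
    homE y j q = ∑ e ∈ Finset.range m,
      MvPolynomial.aeval y ((q.coeff e : MvPolynomial (Fin n) C)) * (y j) ^ e := by
  rw [homE, RingHom.comp_apply, Polynomial.coe_mapRingHom]
  rw [psi_expand y j (lt_of_le_of_lt Polynomial.natDegree_map_le hm)]
  refine Finset.sum_congr rfl fun e _ => ?_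
  rw [Polynomial.coeff_map]
  rfl

lemma homE_apply_map (y : Fin n → F) (j : Fin n)
    (q : Polynomial ↥(MvPolynomial.supported C {i : Fin n | i < j})) :
    homE y j q = psi y j (q.map (Subalgebra.val _).toRingHom) := rfl

lemma locus_transfer (a x : Fin n → F) (j : ℕ) (hj : j ≤ n)
    (hloc : (fun i : Fin j => x (Fin.castLE hj i)) ∈
      locusSet C (fun i : Fin j => a (Fin.castLE hj i)))
    (p : MvPolynomial (Fin n) C) (hp : ∀ i ∈ p.vars, (i : ℕ) < j)
    (hpa : MvPolynomial.aeval a p = 0) : MvPolynomial.aeval x p = 0 := by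
  have hps : p ∈ MvPolynomial.supported C {i : Fin n | (i : ℕ) < j} :=
    MvPolynomial.mem_supported.2 (fun i hi => hp i (by simpa using hi))
  rw [MvPolynomial.supported_eq_range_rename] at hps
  obtain ⟨q0, hq0⟩ := hps
  set e : {i : Fin n | (i : ℕ) < j} → Fin j := fun i => ⟨(i : Fin n), i.2⟩ with he
  have hcomp : (Fin.castLE hj) ∘ e = Subtype.val := by
    funext i; exact Fin.ext rfl
  have hren : MvPolynomial.rename (Fin.castLE hj) (MvPolynomial.rename e q0) = p := by
    rw [MvPolynomial.rename_rename, hcomp]; exact hq0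
  set q := MvPolynomial.rename e q0 with hqdef
  have ha' : MvPolynomial.aeval (fun i : Fin j => a (Fin.castLE hj i)) q = 0 := by
    have h1 : MvPolynomial.aeval a (MvPolynomial.rename (Fin.castLE hj) q)
        = MvPolynomial.aeval (a ∘ Fin.castLE hj) q := MvPolynomial.aeval_rename _ _ _
    rw [hren] at h1
    rw [show (fun i : Fin j => a (Fin.castLE hj i)) = a ∘ Fin.castLE hj from rfl, ← h1]
    exact hpa
  have hx' := hloc q ha'
  have h2 : MvPolynomial.aeval x (MvPolynomial.rename (Fin.castLE hj) q)
      = MvPolynomial.aeval (x ∘ Fin.castLE hj) q := MvPolynomial.aeval_rename _ _ _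
  rw [hren] at h2
  rw [h2]
  exact hx'


lemma pseudoDiv {R : Type*} [CommRing R] [IsDomain R] (g : R[X]) (hg : g ≠ 0) (f : R[X]) :
    ∃ (N : ℕ) (q r : R[X]), Polynomial.C g.leadingCoeff ^ N * f = q * g + r ∧ r.degree < g.degree := by
  suffices H : ∀ (m : ℕ) (f : R[X]), f.natDegree ≤ m →
      ∃ (N : ℕ) (q r : R[X]), Polynomial.C g.leadingCoeff ^ N * f = q * g + r ∧ r.degree < g.degree from
    H f.natDegree f le_rfl
  intro m
  induction m using Nat.strong_induction_on with
  | _ m ih =>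
    intro f hfm
    by_cases hfg : f.degree < g.degree
    · exact ⟨0, 0, f, by ring, hfg⟩
    · push_neg at hfg
      have hf0 : f ≠ 0 := by
        rintro rfl
        simp only [degree_zero, le_bot_iff, degree_eq_bot] at hfg
        exact hg hfg
      have hgk : g.natDegree ≤ f.natDegree := natDegree_le_natDegree hfg
      set k := f.natDegree - g.natDegree with hk
      have hlc : g.leadingCoeff ≠ 0 := leadingCoeff_ne_zero.2 hg
      have hfc : f.leadingCoeff ≠ 0 := leadingCoeff_ne_zero.2 hf0
      set f1 := Polynomial.C g.leadingCoeff * f - Polynomial.C f.leadingCoeff * X ^ k * g with hf1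
      have hdq : (Polynomial.C f.leadingCoeff * X ^ k * g).degree = f.degree := by
        rw [degree_mul, degree_mul, degree_C hfc, degree_X_pow, degree_eq_natDegree hg,
          degree_eq_natDegree hf0, zero_add, ← Nat.cast_add]
        congr 1
        omega
      have hdp : (Polynomial.C g.leadingCoeff * f).degree = f.degree := by
        rw [degree_mul, degree_C hlc, zero_add]
      have hlceq : (Polynomial.C g.leadingCoeff * f).leadingCoeff
          = (Polynomial.C f.leadingCoeff * X ^ k * g).leadingCoeff := by
        rw [leadingCoeff_mul, leadingCoeff_mul, leadingCoeff_mul, leadingCoeff_C,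
          leadingCoeff_C, leadingCoeff_X_pow, mul_one]
        ring
      have hp0 : Polynomial.C g.leadingCoeff * f ≠ 0 := mul_ne_zero (by simpa using hlc) hf0
      have hdeg1 : f1.degree < f.degree := by
        rw [hf1]
        calc (Polynomial.C g.leadingCoeff * f - Polynomial.C f.leadingCoeff * X ^ k * g).degree
            < (Polynomial.C g.leadingCoeff * f).degree :=
              degree_sub_lt (by rw [hdp, hdq]) hp0 hlceq
          _ = f.degree := hdp
      by_cases hf10 : f1 = 0
      · have hgb : (⊥ : WithBot ℕ) < g.degree := by
          rw [bot_lt_iff_ne_bot, Ne, degree_eq_bot]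
          exact hg
        refine ⟨1, Polynomial.C f.leadingCoeff * X ^ k, 0, ?_, by simpa using hgb⟩
        have h2 := sub_eq_zero.1 (hf1 ▸ hf10)
        rw [pow_one, add_zero, h2]
      · have hnd1 : f1.natDegree < f.natDegree := natDegree_lt_natDegree hf10 hdeg1
        obtain ⟨N1, q1, r1, heq, hr⟩ := ih f1.natDegree (lt_of_lt_of_le hnd1 hfm) f1 le_rfl
        refine ⟨N1 + 1, q1 + Polynomial.C g.leadingCoeff ^ N1 * (Polynomial.C f.leadingCoeff * X ^ k), r1, ?_, hr⟩
        have : Polynomial.C g.leadingCoeff ^ (N1 + 1) * f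
            = Polynomial.C g.leadingCoeff ^ N1 * f1 + Polynomial.C g.leadingCoeff ^ N1 * (Polynomial.C f.leadingCoeff * X ^ k) * g := by
          rw [hf1]; ring
        rw [this, heq]; ring

set_option maxHeartbeats 2000000 in
set_option synthInstance.maxHeartbeats 1000000 in
/-- The key inductive step. -/
lemma step (a x : Fin n → F) (j : Fin n) (gj hj : MvPolynomial (Fin n) C)
    (hgv : ∀ i ∈ gj.vars, i ≤ j)
    (hH : MvPolynomial.aeval a hj ≠ 0)
    (hmin : MvPolynomial.aeval
        (fun i => if i = j then (Polynomial.X : Polynomial F) else Polynomial.C (a i)) gj =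
      Polynomial.C (MvPolynomial.aeval a hj) *
        (minpoly (Kf C a j) (a j)).map (algebraMap (Kf C a j) F))
    (hx : ∀ p : MvPolynomial (Fin n) C, (∀ i ∈ p.vars, i < j) →
      MvPolynomial.aeval a p = 0 → MvPolynomial.aeval x p = 0)
    (hgx : MvPolynomial.aeval x gj = 0)
    (hc : IsAlgebraic (Kf C a j) (a j) →
      MvPolynomial.aeval x ((Phi C j gj).coeff (minpoly (Kf C a j) (a j)).natDegree) ≠ 0)
    (p : MvPolynomial (Fin n) C) (hp : ∀ i ∈ p.vars, i ≤ j)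
    (hpa : MvPolynomial.aeval a p = 0) : MvPolynomial.aeval x p = 0 := by
  classical
  have hxS : ∀ b : MvPolynomial (Fin n) C,
      b ∈ MvPolynomial.supported C {i : Fin n | i < j} →
      MvPolynomial.aeval a b = 0 → MvPolynomial.aeval x b = 0 := by
    intro b hb hba
    exact hx b (fun i hi => (MvPolynomial.mem_supported.1 hb) (by simpa using hi)) hba
  obtain ⟨F0, hF0⟩ := exists_lift j p hp
  have hcoeffF0 : ∀ e, ((Phi C j p).coeff e) = ((F0.coeff e : MvPolynomial (Fin n) C)) := by
    intro e; rw [← hF0, Polynomial.coeff_map]; rfl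
  by_cases hal : IsAlgebraic (Kf C a j) (a j)
  · -- algebraic case
    have hint : IsIntegral (Kf C a j) (a j) := hal.isIntegral
    set μ := minpoly (Kf C a j) (a j) with hμdef
    set M := μ.map (algebraMap (Kf C a j) F) with hMdef
    set d := μ.natDegree with hddef
    have hμmonic : μ.Monic := minpoly.monic hint
    have hμne : μ ≠ 0 := minpoly.ne_zero hint
    have hMmonic : M.Monic := hμmonic.map _
    have hMdeg : M.natDegree = d := hμmonic.natDegree_map _
    set H := MvPolynomial.aeval a hj with hHdef
    set G := Phi C j gj with hGdef
    have hGmap : G.map (MvPolynomial.aeval a : MvPolynomial (Fin n) C →ₐ[C] F).toRingHom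
        = Polynomial.C H * M := by rw [hGdef, mapPhi]; exact hmin
    have hGcoeff : ∀ e, MvPolynomial.aeval a (G.coeff e) = H * M.coeff e := by
      intro e
      have h1 := congrArg (fun q => Polynomial.coeff q e) hGmap
      simpa [Polynomial.coeff_map, Polynomial.coeff_C_mul] using h1
    obtain ⟨Gg, hGg⟩ := exists_lift j gj hgv
    have hGgcoeff : ∀ e, ((Gg.coeff e : MvPolynomial (Fin n) C)) = G.coeff e := by
      intro e; rw [hGdef, ← hGg, Polynomial.coeff_map]; rfl
    have hdG : d ≤ G.natDegree := by
      have h1 : (Polynomial.C H * M).natDegree = d := by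
        rw [Polynomial.natDegree_C_mul hH, hMdeg]
      calc d = (G.map (MvPolynomial.aeval a :
              MvPolynomial (Fin n) C →ₐ[C] F).toRingHom).natDegree := by rw [hGmap, h1]
        _ ≤ G.natDegree := Polynomial.natDegree_map_le
    have hdGg : d ≤ Gg.natDegree := by
      refine le_trans hdG ?_
      rw [hGdef, ← hGg]
      exact Polynomial.natDegree_map_le
    -- the truncation of Gg below degree d
    set G0 : Polynomial ↥(MvPolynomial.supported C {i : Fin n | i < j}) :=
      ∑ e ∈ Finset.range (d + 1), Polynomial.C (Gg.coeff e) * Polynomial.X ^ e with hG0def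
    have hG0coeff : ∀ e, G0.coeff e = if e ≤ d then Gg.coeff e else 0 := by
      intro e
      rw [hG0def, Polynomial.finset_sum_coeff]
      simp only [Polynomial.coeff_C_mul, Polynomial.coeff_X_pow, mul_ite, mul_one, mul_zero]
      rw [Finset.sum_ite_eq (Finset.range (d + 1)) e (fun e => Gg.coeff e)]
      simp [Nat.lt_succ_iff]
    have hMd : M.coeff d = 1 := by
      rw [← hMdeg]; exact hMmonic.coeff_natDegree
    have haGd : MvPolynomial.aeval a ((Gg.coeff d : MvPolynomial (Fin n) C)) = H := by
      rw [hGgcoeff, hGcoeff, hMd, mul_one]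
    have hGgdne : Gg.coeff d ≠ 0 := by
      intro h0
      apply hH
      rw [← haGd, h0]
      simp
    have hG0dcoeff : G0.coeff d = Gg.coeff d := by rw [hG0coeff]; simp
    have hG0degle : G0.degree ≤ (d : WithBot ℕ) := by
      rw [Polynomial.degree_le_iff_coeff_zero]
      intro m hm
      rw [hG0coeff]
      have : ¬ (m ≤ d) := by
        intro hle
        exact absurd (Nat.cast_le.2 hle) (not_le.2 hm)
      simp [this]
    have hG0degge : (d : WithBot ℕ) ≤ G0.degree :=
      Polynomial.le_degree_of_ne_zero (by rw [hG0dcoeff]; exact hGgdne)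
    have hG0deg : G0.degree = (d : WithBot ℕ) := le_antisymm hG0degle hG0degge
    have hG0ne : G0 ≠ 0 := by
      intro h0
      rw [h0, Polynomial.degree_zero] at hG0deg
      exact (by simp : ((⊥ : WithBot ℕ) ≠ (d : WithBot ℕ))) hG0deg
    have hG0nat : G0.natDegree = d := Polynomial.natDegree_eq_of_degree_eq_some hG0deg
    have hG0lead : G0.leadingCoeff = Gg.coeff d := by
      rw [Polynomial.leadingCoeff, hG0nat, hG0dcoeff]
    obtain ⟨N, q0, r0, heq, hrdeg⟩ := pseudoDiv G0 hG0ne F0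
    -- evaluate the division identity at a and x
    have hEF0a : homE a j F0 = 0 := by
      rw [homE_apply_map, hF0, psi_phi]; exact hpa
    have hEF0x : homE x j F0 = MvPolynomial.aeval x p := by
      rw [homE_apply_map, hF0, psi_phi]
    have hEG0 : ∀ y : Fin n → F, homE y j G0
        = ∑ e ∈ Finset.range (d + 1), MvPolynomial.aeval y (G.coeff e) * (y j) ^ e := by
      intro y
      rw [homE_expand y j (lt_of_le_of_lt (Polynomial.natDegree_le_iff_degree_le.2 hG0degle)
        (Nat.lt_succ_self d))]
      refine Finset.sum_congr rfl fun e he => ?_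
      rw [hG0coeff]
      rw [if_pos (Nat.lt_succ_iff.1 (Finset.mem_range.1 he))]
      rw [hGgcoeff]
    have hEG0a : homE a j G0 = 0 := by
      rw [hEG0]
      have : ∀ e ∈ Finset.range (d + 1),
          MvPolynomial.aeval a (G.coeff e) * (a j) ^ e = H * (M.coeff e * (a j) ^ e) := by
        intro e _
        rw [hGcoeff]; ring
      rw [Finset.sum_congr rfl this, ← Finset.mul_sum]
      have hMeval : M.eval (a j) = 0 := by
        rw [hMdef, Polynomial.eval_map, ← Polynomial.aeval_def]
        exact minpoly.aeval _ _
      have : ∑ e ∈ Finset.range (d + 1), M.coeff e * (a j) ^ e = M.eval (a j) := by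
        rw [Polynomial.eval_eq_sum_range' (lt_of_le_of_lt hMdeg.le (Nat.lt_succ_self d))]
      rw [this, hMeval, mul_zero]
    have hhiva : ∀ e, d < e → MvPolynomial.aeval a (G.coeff e) = 0 := by
      intro e he
      rw [hGcoeff, Polynomial.coeff_eq_zero_of_natDegree_lt (hMdeg ▸ he), mul_zero]
    have hhivx : ∀ e, d < e → MvPolynomial.aeval x (G.coeff e) = 0 := by
      intro e he
      refine hxS _ ?_ (hhiva e he)
      rw [← hGgcoeff]
      exact (Gg.coeff e).2
    have hEG0x : homE x j G0 = 0 := by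
      have hEGg : homE x j Gg = 0 := by
        rw [homE_apply_map, hGg, psi_phi]; exact hgx
      have hexp : homE x j Gg = ∑ e ∈ Finset.range (Gg.natDegree + 1),
          MvPolynomial.aeval x ((Gg.coeff e : MvPolynomial (Fin n) C)) * (x j) ^ e :=
        homE_expand x j (Nat.lt_succ_self _)
      have hsplit := Finset.sum_range_add_sum_Ico
        (fun e => MvPolynomial.aeval x ((Gg.coeff e : MvPolynomial (Fin n) C)) * (x j) ^ e)
        (Nat.succ_le_succ hdGg)
      have htail : ∑ e ∈ Finset.Ico (d + 1) (Gg.natDegree + 1),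
          MvPolynomial.aeval x ((Gg.coeff e : MvPolynomial (Fin n) C)) * (x j) ^ e = 0 := by
        refine Finset.sum_eq_zero fun e he => ?_
        have hde : d < e := Nat.lt_of_succ_le (Finset.mem_Ico.1 he).1
        rw [hGgcoeff, hhivx e hde, zero_mul]
      have hhead : ∑ e ∈ Finset.range (d + 1),
          MvPolynomial.aeval x ((Gg.coeff e : MvPolynomial (Fin n) C)) * (x j) ^ e
          = homE x j G0 := by
        rw [hEG0]
        refine Finset.sum_congr rfl fun e _ => ?_
        rw [hGgcoeff]
      rw [hexp, ← hsplit, htail, add_zero] at hEGg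
      rw [← hhead]
      exact hEGg
    -- the division identity evaluated at a
    have heqa := congrArg (homE a j) heq
    rw [map_add, map_mul, map_mul, map_pow, hEF0a, hEG0a, mul_zero, mul_zero, zero_add] at heqa
    have hEr0a : homE a j r0 = 0 := heqa.symm
    -- the remainder is zero as a polynomial over the subfield
    set P := r0.map (nu a j) with hPdef
    have hPa : Polynomial.aeval (a j) P = 0 := by
      rw [hPdef, aeval_nu_map, ← homE_apply_map]
      exact hEr0a
    have hPdeg : P.degree < μ.degree := by
      calc P.degree ≤ r0.degree := Polynomial.degree_map_le
        _ < G0.degree := hrdeg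
        _ = (d : WithBot ℕ) := hG0deg
        _ = μ.degree := (Polynomial.degree_eq_natDegree hμne).symm
    have hP0 : P = 0 := by
      by_contra hne
      exact absurd (minpoly.degree_le_of_ne_zero (Kf C a j) (a j) hne hPa) (not_le.2 hPdeg)
    have hr0a : ∀ e, MvPolynomial.aeval a ((r0.coeff e : MvPolynomial (Fin n) C)) = 0 := by
      intro e
      have h1 : nu a j (r0.coeff e) = 0 := by
        have := congrArg (fun q => Polynomial.coeff q e) hP0
        simpa [hPdef, Polynomial.coeff_map] using this
      rw [← nu_apply a j, h1]
      simp
    have hEr0x : homE x j r0 = 0 := by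
      rw [homE_expand x j (Nat.lt_succ_self r0.natDegree)]
      refine Finset.sum_eq_zero fun e _ => ?_
      rw [hxS _ (r0.coeff e).2 (hr0a e), zero_mul]
    -- the division identity evaluated at x
    have heqx := congrArg (homE x j) heq
    rw [map_add, map_mul, map_mul, map_pow, hEF0x, hEG0x, mul_zero, hEr0x, add_zero] at heqx
    have hlead : homE x j (Polynomial.C G0.leadingCoeff) ≠ 0 := by
      rw [hG0lead, homE_apply_map, Polynomial.map_C, psi_C]
      show MvPolynomial.aeval x ((Gg.coeff d : MvPolynomial (Fin n) C)) ≠ 0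
      rw [hGgcoeff d]
      exact hc hal
    have hpow : homE x j (Polynomial.C G0.leadingCoeff) ^ N ≠ 0 := pow_ne_zero _ hlead
    have := mul_eq_zero.1 heqx
    rcases this with h | h
    · exact absurd h hpow
    · exact h
  · -- transcendental case
    set P := F0.map (nu a j) with hPdef
    have hPa : Polynomial.aeval (a j) P = 0 := by
      rw [hPdef, aeval_nu_map, hF0, psi_phi]
      exact hpa
    have hP0 : P = 0 := by
      by_contra hne
      exact hal ⟨P, hne, hPa⟩
    have hcoeff0 : ∀ e, MvPolynomial.aeval a ((F0.coeff e : MvPolynomial (Fin n) C)) = 0 := by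
      intro e
      have h1 : nu a j (F0.coeff e) = 0 := by
        have := congrArg (fun q => Polynomial.coeff q e) hP0
        simpa [hPdef, Polynomial.coeff_map] using this
      rw [← nu_apply a j, h1]
      simp
    have hfin : homE x j F0 = MvPolynomial.aeval x p := by
      rw [homE_apply_map, hF0, psi_phi]
    rw [← hfin, homE_expand x j (Nat.lt_succ_self F0.natDegree)]
    refine Finset.sum_eq_zero fun e _ => ?_
    rw [hxS _ (F0.coeff e).2 (hcoeff0 e), zero_mul]


set_option maxHeartbeats 2000000 in
set_option synthInstance.maxHeartbeats 1000000 in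
theorem statement17' {C F : Type*} [Field C] [Field F] [Algebra C F]
    (n : ℕ) (a : Fin n → F)
    (g h : Fin n → MvPolynomial (Fin n) C)
    (hgvars : ∀ j : Fin n, ∀ i ∈ (g j).vars, i ≤ j)
    (hh0 : ∀ j : Fin n, MvPolynomial.aeval a (h j) ≠ 0)
    (hmin : ∀ j : Fin n,
      MvPolynomial.aeval
          (fun i => if i = j then (Polynomial.X : Polynomial F)
            else Polynomial.C (a i)) (g j) =
        Polynomial.C (MvPolynomial.aeval a (h j)) *
          (minpoly (Kf C a j) (a j)).map (algebraMap (Kf C a j) F)) :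
    (∀ (l : ℕ) (f : Fin l → MvPolynomial (Fin n) C),
      (∀ i, MvPolynomial.aeval a (f i) = 0) →
      ∃ U : Set (Fin n → F), IsZariskiOpen U ∧ a ∈ U ∧
        ∀ x ∈ U, (∀ j, MvPolynomial.aeval x (g j) = 0) →
          ∀ i, MvPolynomial.aeval x (f i) = 0) ∧
    (∃ V : Set (Fin n → F), IsZariskiOpen V ∧ a ∈ V ∧
      ∀ (j : ℕ) (hj : j ≤ n), ∀ x ∈ V,
        (x ∈ locusSet C a ↔
          ((fun i : Fin j => x (Fin.castLE hj i)) ∈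
              locusSet C (fun i : Fin j => a (Fin.castLE hj i)) ∧
            ∀ k : Fin n, j ≤ (k : ℕ) → MvPolynomial.aeval x (g k) = 0))) := by
  classical
  set cP : Fin n → MvPolynomial (Fin n) C :=
    fun j => (Phi C j (g j)).coeff (minpoly (Kf C a j) (a j)).natDegree with hcP
  set E : MvPolynomial (Fin n) C :=
    ∏ j : Fin n, (if IsAlgebraic (Kf C a j) (a j) then cP j else 1) with hE
  set V : Set (Fin n → F) := {x | ∃ f ∈ ({MvPolynomial.map (algebraMap C F) E} :
    Set (MvPolynomial (Fin n) F)), MvPolynomial.eval x f ≠ 0} with hV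
  have hVmem : ∀ x : Fin n → F, x ∈ V ↔ MvPolynomial.aeval x E ≠ 0 := by
    intro x
    have hrw : MvPolynomial.aeval x E
        = MvPolynomial.eval x (MvPolynomial.map (algebraMap C F) E) := by
      rw [MvPolynomial.aeval_def, MvPolynomial.eval₂_eq_eval_map]
    constructor
    · rintro ⟨f, hf, hfx⟩
      rw [Set.mem_singleton_iff] at hf
      subst hf
      rw [hrw]
      exact hfx
    · intro hx
      exact ⟨_, rfl, by rwa [hrw] at hx⟩
  have hGmapAll : ∀ j : Fin n,
      (Phi C j (g j)).map (MvPolynomial.aeval a :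
          MvPolynomial (Fin n) C →ₐ[C] F).toRingHom
        = Polynomial.C (MvPolynomial.aeval a (h j)) *
          (minpoly (Kf C a j) (a j)).map (algebraMap (Kf C a j) F) := by
    intro j
    rw [mapPhi]
    exact hmin j
  have hcPa : ∀ j : Fin n, IsAlgebraic (Kf C a j) (a j) →
      MvPolynomial.aeval a (cP j) = MvPolynomial.aeval a (h j) := by
    intro j hal
    have h1 := congrArg
      (fun q => Polynomial.coeff q (minpoly (Kf C a j) (a j)).natDegree) (hGmapAll j)
    simp only [Polynomial.coeff_map, Polynomial.coeff_C_mul] at h1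
    rw [hcP]
    show (MvPolynomial.aeval a).toRingHom
        (((Phi C j) (g j)).coeff (minpoly (Kf C a j) (a j)).natDegree)
      = MvPolynomial.aeval a (h j)
    rw [h1, (minpoly.monic hal.isIntegral).coeff_natDegree, map_one, mul_one]
  have haV : a ∈ V := by
    rw [hVmem]
    rw [hE, map_prod]
    rw [Finset.prod_ne_zero_iff]
    intro j _
    by_cases hal : IsAlgebraic (Kf C a j) (a j)
    · rw [if_pos hal, hcPa j hal]
      exact hh0 j
    · rw [if_neg hal]
      simp
  have hxVne : ∀ x : Fin n → F, x ∈ V → ∀ j : Fin n, IsAlgebraic (Kf C a j) (a j) →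
      MvPolynomial.aeval x (cP j) ≠ 0 := by
    intro x hx j hal
    rw [hVmem, hE, map_prod, Finset.prod_ne_zero_iff] at hx
    have := hx j (Finset.mem_univ j)
    rwa [if_pos hal] at this
  have haGzero : ∀ k : Fin n, MvPolynomial.aeval a (g k) = 0 := by
    intro k
    rw [← psi_phi a k (g k)]
    have : psi a k (Phi C k (g k)) = Polynomial.eval (a k)
        ((Phi C k (g k)).map (MvPolynomial.aeval a :
          MvPolynomial (Fin n) C →ₐ[C] F).toRingHom) := by
      rw [Polynomial.eval_map]
      rfl
    rw [this, hGmapAll k, Polynomial.eval_mul, Polynomial.eval_map,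
      ← Polynomial.aeval_def, minpoly.aeval, mul_zero]
  have hII : ∀ (j : ℕ) (hj : j ≤ n), ∀ x ∈ V,
      (x ∈ locusSet C a ↔
        ((fun i : Fin j => x (Fin.castLE hj i)) ∈
            locusSet C (fun i : Fin j => a (Fin.castLE hj i)) ∧
          ∀ k : Fin n, j ≤ (k : ℕ) → MvPolynomial.aeval x (g k) = 0)) := by
    intro j hj x hxV
    constructor
    · intro hxl
      constructor
      · intro q hq
        have h1 : MvPolynomial.aeval a (MvPolynomial.rename (Fin.castLE hj) q) = 0 := by
          rw [MvPolynomial.aeval_rename]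
          exact hq
        have h2 := hxl _ h1
        rwa [MvPolynomial.aeval_rename] at h2
      · intro k _
        exact hxl (g k) (haGzero k)
    · rintro ⟨h1, h2⟩
      have key : ∀ m, j ≤ m → m ≤ n → ∀ p : MvPolynomial (Fin n) C,
          (∀ i ∈ p.vars, (i : ℕ) < m) → MvPolynomial.aeval a p = 0 →
          MvPolynomial.aeval x p = 0 := by
        intro m hjm
        induction m, hjm using Nat.le_induction with
        | base =>
          intro _ p hp hpa
          exact locus_transfer a x j hj h1 p hp hpa
        | succ m hjm ih =>
          intro hm p hp hpa
          have hmn : m < n := hm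
          set k : Fin n := ⟨m, hmn⟩ with hk
          refine step a x k (g k) (h k) (hgvars k) (hh0 k) (hmin k) ?_ ?_ ?_ p ?_ hpa
          · intro q hq hqa
            refine ih (Nat.le_of_succ_le hm) q (fun i hi => ?_) hqa
            exact Fin.lt_def.mp (hq i hi)
          · exact h2 k hjm
          · intro hal
            exact hxVne x hxV k hal
          · intro i hi
            have h3 := hp i hi
            rw [Fin.le_def]
            show (i : ℕ) ≤ m
            omega
      intro f hf
      exact key n hj le_rfl f (fun i _ => i.isLt) hf
  refine ⟨?_, V, ⟨_, hV⟩, haV, hII⟩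
  intro l f hf
  refine ⟨V, ⟨_, hV⟩, haV, ?_⟩
  intro x hxV hgx i
  have h0 : (fun i : Fin 0 => x (Fin.castLE (Nat.zero_le n) i)) ∈
      locusSet C (fun i : Fin 0 => a (Fin.castLE (Nat.zero_le n) i)) := by
    intro q hq
    have heq : (fun i : Fin 0 => x (Fin.castLE (Nat.zero_le n) i))
        = (fun i : Fin 0 => a (Fin.castLE (Nat.zero_le n) i)) := funext fun i => i.elim0
    rw [heq]
    exact hq
  have hxl : x ∈ locusSet C a :=
    (hII 0 (Nat.zero_le n) x hxV).2 ⟨h0, fun k _ => hgx k⟩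
  exact hxl (f i) (hf i)

end Aux

/-- Lemma `TOOL`.
Let `F/C` be a field extension and `a = (a_0, …, a_{n-1}) ∈ Fⁿ`.  For each `j < n`
choose `g_j ∈ C[X_0,…,X_j]` and `h_j ∈ C[X_0,…,X_{j-1}]` such that if `a_j` is
algebraic over `C(a_0,…,a_{j-1})` then `h_j(a) ≠ 0` and
`g_j(a_0,…,a_{j-1},X_j)/h_j(a_0,…,a_{j-1})` is the minimal polynomial of `a_j` over
`C(a_0,…,a_{j-1})`, and if `a_j` is transcendental then `g_j = 0` and `h_j = 1`.
Then: (i) for finitely many `f_0,…,f_{l-1} ∈ C[X_0,…,X_{n-1}]` vanishing at `a`, there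
is a Zariski open `U ∋ a` such that every `x ∈ U` with `g_0(x) = … = g_{n-1}(x) = 0`
satisfies `f_i(x) = 0` for all `i`; (ii) there is a Zariski open `V ∋ a` such that
for every `j ≤ n` and `x ∈ V`: `x ∈ locus(a/C)(F)` iff `(x_0,…,x_{j-1})` lies in
`locus((a_0,…,a_{j-1})/C)(F)` and `g_j(x) = … = g_{n-1}(x) = 0`. -/
theorem statement17 {C F : Type*} [Field C] [Field F] [Algebra C F]
    (n : ℕ) (a : Fin n → F)
    (g h : Fin n → MvPolynomial (Fin n) C)
    (hgvars : ∀ j : Fin n, ∀ i ∈ (g j).vars, i ≤ j)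
    (hhvars : ∀ j : Fin n, ∀ i ∈ (h j).vars, i < j)
    (hh0 : ∀ j : Fin n, MvPolynomial.aeval a (h j) ≠ 0)
    (hmin : ∀ j : Fin n,
      MvPolynomial.aeval
          (fun i => if i = j then (Polynomial.X : Polynomial F)
            else Polynomial.C (a i)) (g j) =
        Polynomial.C (MvPolynomial.aeval a (h j)) *
          (minpoly (IntermediateField.adjoin C {y | ∃ i : Fin n, i < j ∧ y = a i})
              (a j)).map
            (algebraMap (IntermediateField.adjoin C {y | ∃ i : Fin n, i < j ∧ y = a i}) F))
    (htrans : ∀ j : Fin n,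
      ¬ IsAlgebraic (IntermediateField.adjoin C {y | ∃ i : Fin n, i < j ∧ y = a i})
          (a j) →
        g j = 0 ∧ h j = 1) :
    (∀ (l : ℕ) (f : Fin l → MvPolynomial (Fin n) C),
      (∀ i, MvPolynomial.aeval a (f i) = 0) →
      ∃ U : Set (Fin n → F), IsZariskiOpen U ∧ a ∈ U ∧
        ∀ x ∈ U, (∀ j, MvPolynomial.aeval x (g j) = 0) →
          ∀ i, MvPolynomial.aeval x (f i) = 0) ∧
    (∃ V : Set (Fin n → F), IsZariskiOpen V ∧ a ∈ V ∧
      ∀ (j : ℕ) (hj : j ≤ n), ∀ x ∈ V,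
        (x ∈ locusSet C a ↔
          ((fun i : Fin j => x (Fin.castLE hj i)) ∈
              locusSet C (fun i : Fin j => a (Fin.castLE hj i)) ∧
            ∀ k : Fin n, j ≤ (k : ℕ) → MvPolynomial.aeval x (g k) = 0))) :=
  statement17' n a g h hgvars hh0 hmin

end SepPaper
end
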